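/- arXiv:2503.23826 — 4 statements merged into one kernel-verified Lean document; each statement's English description precedes it below -/
import Mathlib

section
/- (Pumping Grounded Pairs) Let A ∈ ℤ∞^{S×S} be a stable-cycle matrix. For every n ∈ ℕ there exists M₀ ∈ ℕ such that for all m ≥ M₀ and all s,r ∈ S: (1) if (s,r) ∉ GrnPairs(A) then (A^{2𝔪·m})_{s,r} > n; (2) if (s,r) ∈ GrnPairs(A) with grounding state g, then (A^{2𝔪·m})_{s,r} = (A^{2𝔪·M₀})_{s,r} = (A^𝔪)_{s,g} + (A^𝔪)_{g,r}, and moreover (A^{2𝔪·m′})_{s,r} ≤ (A^𝔪)_{s,g} + (A^𝔪)_{g,r} for every m′ ≥ 1. -/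
/-- `ℤ∞ = ℤ ∪ {∞}`. -/
abbrev ZInf : Type := WithTop ℤ

/-- `𝔫 = |S|!`. -/
def nfac (S : Type*) [Fintype S] : ℕ := (Fintype.card S).factorial

/-- `𝔪 = |S| ⬝ 𝔫`. -/
def mfac (S : Type*) [Fintype S] : ℕ := Fintype.card S * nfac S

/-- The `(s, r)` entry of a min-plus matrix, as an element of `ℤ∞`.
Matrices over `Tropical ZInf` are multiplied in the min-plus (tropical) semiring:
`(A * B) s r = min_t (A s t + B t r)`, and `A ^ n` is the `n`-fold min-plus power. -/
def en {S : Type*} (A : Matrix S S (Tropical ZInf)) (s r : S) : ZInf :=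
  (A s r).untrop

/-- `A` is a stable-cycle matrix with baseline `s₀`: for every `n ≥ 1`, `(A^n)_{s₀,s₀} = 0`
and `(A^n)_{r,r} ≥ 0` for every `r`. -/
def IsStableCycle {S : Type*} [Fintype S] [DecidableEq S]
    (A : Matrix S S (Tropical ZInf)) (s₀ : S) : Prop :=
  ∀ n : ℕ, 1 ≤ n → en (A ^ n) s₀ s₀ = 0 ∧ ∀ r : S, 0 ≤ en (A ^ n) r r

/-- `MinStates B = {r : B_{r,r} = 0}`. -/
def MinStates {S : Type*} (B : Matrix S S (Tropical ZInf)) : Set S :=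
  {r | en B r r = 0}

/-- `RefStates B = {r : B_{r,r} < ∞}`. -/
def RefStates {S : Type*} (B : Matrix S S (Tropical ZInf)) : Set S :=
  {r | en B r r < ⊤}

/-- `(s, r)` is a grounded pair for `A` if there is `g ∈ MinStates (A^𝔪)` with
`(A^𝔪)_{s,g} < ∞` and `(A^𝔪)_{g,r} < ∞`. -/
def GrnPairs {S : Type*} [Fintype S] [DecidableEq S] (A : Matrix S S (Tropical ZInf)) :
    Set (S × S) :=
  {p | ∃ g ∈ MinStates (A ^ mfac S),
      en (A ^ mfac S) p.1 g < ⊤ ∧ en (A ^ mfac S) g p.2 < ⊤}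

/-- `g` is a grounding state of the pair `(s, r)`: it is in `MinStates (A^𝔪)`, has finite
entries `(A^𝔪)_{s,g}, (A^𝔪)_{g,r}`, and minimizes `(A^𝔪)_{s,g} + (A^𝔪)_{g,r}` among
all states of `MinStates (A^𝔪)`. -/
def IsGroundingState {S : Type*} [Fintype S] [DecidableEq S]
    (A : Matrix S S (Tropical ZInf)) (s r g : S) : Prop :=
  g ∈ MinStates (A ^ mfac S) ∧
  en (A ^ mfac S) s g < ⊤ ∧ en (A ^ mfac S) g r < ⊤ ∧
  ∀ g' ∈ MinStates (A ^ mfac S),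
    en (A ^ mfac S) s g + en (A ^ mfac S) g r ≤
      en (A ^ mfac S) s g' + en (A ^ mfac S) g' r

namespace Pump

variable {S : Type*} [Fintype S] [DecidableEq S]

lemma en_mul (X Y : Matrix S S (Tropical ZInf)) (s r : S) :
    en (X * Y) s r = Finset.univ.inf (fun t => en X s t + en Y t r) := by
  unfold en
  rw [Matrix.mul_apply, Finset.untrop_sum']
  congr 1

lemma en_mul_le (X Y : Matrix S S (Tropical ZInf)) (s t r : S) :
    en (X * Y) s r ≤ en X s t + en Y t r := by
  rw [en_mul]; exact Finset.inf_le (Finset.mem_univ t)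

lemma en_mul_exists [Nonempty S] (X Y : Matrix S S (Tropical ZInf)) (s r : S) :
    ∃ t, en (X * Y) s r = en X s t + en Y t r := by
  rw [en_mul]
  obtain ⟨t, -, ht⟩ := Finset.exists_mem_eq_inf Finset.univ Finset.univ_nonempty
    (fun t => en X s t + en Y t r)
  exact ⟨t, ht⟩

lemma en_one (s : S) : en (1 : Matrix S S (Tropical ZInf)) s s = 0 := by
  unfold en; rw [Matrix.one_apply_eq]; exact Tropical.untrop_one

/-- weight of walk -/
def wt (M : Matrix S S (Tropical ZInf)) (ω : ℕ → S) (k : ℕ) : ZInf :=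
  ∑ i ∈ Finset.range k, en M (ω i) (ω (i+1))

lemma wt_succ (M : Matrix S S (Tropical ZInf)) (ω : ℕ → S) (k : ℕ) :
    wt M ω (k+1) = wt M ω k + en M (ω k) (ω (k+1)) :=
  Finset.sum_range_succ _ _

lemma wt_sound (M : Matrix S S (Tropical ZInf)) :
    ∀ k (ω : ℕ → S), en (M ^ k) (ω 0) (ω k) ≤ wt M ω k := by
  intro k
  induction k with
  | zero => intro ω; simp [wt, pow_zero, en_one]
  | succ k ih =>
    intro ω
    calc en (M ^ (k+1)) (ω 0) (ω (k+1))
        ≤ en (M ^ k) (ω 0) (ω k) + en M (ω k) (ω (k+1)) := by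
          rw [pow_succ]; exact en_mul_le _ _ _ _ _
      _ ≤ wt M ω k + en M (ω k) (ω (k+1)) := add_le_add_left (ih ω) _
      _ = wt M ω (k+1) := (wt_succ _ _ _).symm

lemma wt_complete [Nonempty S] (M : Matrix S S (Tropical ZInf)) :
    ∀ k, 1 ≤ k → ∀ s r : S, ∃ ω : ℕ → S, ω 0 = s ∧ ω k = r ∧ wt M ω k = en (M ^ k) s r := by
  intro k hk
  induction k, hk using Nat.le_induction with
  | base =>
    intro s r
    refine ⟨fun x => if x = 0 then s else r, by simp, by simp, ?_⟩
    simp [wt, pow_one]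
  | succ k hk ih =>
    intro s r
    have h : en (M ^ (k+1)) s r = en (M ^ k * M) s r := by rw [pow_succ]
    obtain ⟨t, ht⟩ := en_mul_exists (M ^ k) M s r
    obtain ⟨ω, h0, hkk, hwt⟩ := ih s t
    refine ⟨fun x => if x ≤ k then ω x else r, by simpa using h0, by simp, ?_⟩
    have hagree : wt M (fun x => if x ≤ k then ω x else r) k = wt M ω k := by
      apply Finset.sum_congr rfl
      intro i hi
      have hi' : i < k := Finset.mem_range.mp hi
      simp only [if_pos hi'.le, if_pos (Nat.succ_le_of_lt hi')]
    rw [wt_succ, hagree, hwt, h, ht]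
    simp [Nat.lt_irrefl, hkk]

set_option linter.unusedSectionVars false

lemma wt_split (M : Matrix S S (Tropical ZInf)) (ω : ℕ → S) (i k : ℕ) (hik : i ≤ k) :
    wt M ω k = wt M ω i + wt M (fun x => ω (i + x)) (k - i) := by
  unfold wt
  rw [← Nat.Ico_zero_eq_range, ← Finset.sum_Ico_consecutive _ (Nat.zero_le i) hik,
    Nat.Ico_zero_eq_range]
  congr 1
  rw [Finset.sum_Ico_eq_sum_range]
  apply Finset.sum_congr rfl
  intro x _
  simp only []
  have : i + (x + 1) = i + x + 1 := by omega
  rw [this]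

lemma wt_cut (M : Matrix S S (Tropical ZInf)) (ω : ℕ → S) (i j k : ℕ)
    (hij : i < j) (hjk : j ≤ k) (hrep : ω i = ω j) :
    ∃ ω' : ℕ → S, ω' 0 = ω 0 ∧ ω' (k - (j - i)) = ω k ∧
      wt M ω k = wt M ω' (k - (j - i)) + wt M (fun x => ω (i + x)) (j - i) := by
  set d := j - i with hd
  have hdk : d ≤ k := le_trans (Nat.sub_le _ _) hjk
  have hid : i + d = j := by omega
  have hik' : i ≤ k - d := by omega
  refine ⟨fun x => if x < i then ω x else ω (x + d), ?_, ?_, ?_⟩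
  · by_cases h0 : 0 < i
    · simp [h0]
    · have hi0 : i = 0 := by omega
      simp only [if_neg h0]
      rw [show (0:ℕ) + d = j by omega, ← hrep, hi0]
  · simp only []
    rw [if_neg (by omega : ¬ k - d < i), Nat.sub_add_cancel hdk]
  · have hjk' : k - d - i = k - j := by omega
    have lhs : wt M ω k = wt M ω i + (wt M (fun x => ω (i + x)) d +
        wt M (fun x => ω (j + x)) (k - j)) := by
      rw [wt_split M ω i k (le_trans hij.le hjk),
        wt_split M (fun x => ω (i + x)) d (k - i) (by omega)]
      congr 1
      congr 1
      · rw [show k - i - d = k - j by omega]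
        apply Finset.sum_congr rfl
        intro x _
        have e1 : i + (d + x) = j + x := by omega
        have e2 : i + (d + (x + 1)) = j + (x + 1) := by omega
        simp only []
        rw [e1, e2]
    have rhs : wt M (fun x => if x < i then ω x else ω (x + d)) (k - d)
        = wt M ω i + wt M (fun x => ω (j + x)) (k - j) := by
      rw [wt_split M _ i (k - d) hik']
      congr 1
      · apply Finset.sum_congr rfl
        intro x hx
        have hxi : x < i := Finset.mem_range.mp hx
        simp only [if_pos hxi]
        by_cases hx1 : x + 1 < i
        · rw [if_pos hx1]
        · have hx1' : x + 1 + d = j := by omega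
          rw [if_neg hx1, hx1', ← hrep, show i = x + 1 by omega]
      · rw [hjk']
        apply Finset.sum_congr rfl
        intro x _
        simp only [if_neg (by omega : ¬ i + x < i), if_neg (by omega : ¬ i + (x+1) < i)]
        have e1 : i + x + d = j + x := by omega
        have e2 : i + (x + 1) + d = j + (x + 1) := by omega
        rw [e1, e2]
    rw [lhs, rhs]
    abel

lemma exists_repeat [Nonempty S] (ω : ℕ → S) :
    ∃ i j, i < j ∧ j ≤ Fintype.card S ∧ ω i = ω j := by
  have h : Fintype.card S < Fintype.card (Fin (Fintype.card S + 1)) := by simp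
  obtain ⟨a, b, hab, heq⟩ := Fintype.exists_ne_map_eq_of_card_lt
    (fun x : Fin (Fintype.card S + 1) => ω x) h
  rcases lt_or_gt_of_ne hab with h' | h'
  · exact ⟨a, b, h', Nat.lt_succ_iff.mp b.isLt, heq⟩
  · exact ⟨b, a, h', Nat.lt_succ_iff.mp a.isLt, heq.symm⟩

lemma en_diag_pow_le (M : Matrix S S (Tropical ZInf)) {g : S} (hg : en M g g ≤ 0) :
    ∀ j, en (M ^ j) g g ≤ 0 := by
  intro j
  induction j with
  | zero => rw [pow_zero, en_one]
  | succ j ih =>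
    calc en (M ^ (j+1)) g g ≤ en (M ^ j) g g + en M g g := by
          rw [pow_succ]; exact en_mul_le _ _ _ _ _
      _ ≤ 0 + 0 := add_le_add ih hg
      _ = 0 := by simp

lemma compress [Nonempty S] (M : Matrix S S (Tropical ZInf))
    (hdiag : ∀ j, 1 ≤ j → ∀ τ : S, 0 ≤ en (M ^ j) τ τ) :
    ∀ a (ω : ℕ → S), ∃ (a' : ℕ) (ω' : ℕ → S), a' ≤ a ∧ a' ≤ Fintype.card S ∧ (1 ≤ a → 1 ≤ a') ∧
      ω' 0 = ω 0 ∧ ω' a' = ω a ∧ wt M ω' a' ≤ wt M ω a := by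
  intro a
  induction a using Nat.strong_induction_on with
  | _ a ih =>
    intro ω
    by_cases ha : a ≤ Fintype.card S
    · exact ⟨a, ω, le_rfl, ha, fun h => h, rfl, rfl, le_rfl⟩
    · obtain ⟨i, j, hij, hjN, hrep⟩ := exists_repeat ω
      have hja : j ≤ a := by omega
      obtain ⟨ω', h0, hend, heq⟩ := wt_cut M ω i j a hij hja hrep
      have hcyc : (0 : ZInf) ≤ wt M (fun x => ω (i + x)) (j - i) := by
        have hs := wt_sound M (j - i) (fun x => ω (i + x))
        simp only [Nat.add_zero] at hs
        rw [show i + (j - i) = j by omega, ← hrep] at hs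
        exact le_trans (hdiag (j - i) (by omega) (ω i)) hs
      have hle : wt M ω' (a - (j - i)) ≤ wt M ω a := by
        rw [heq]; exact le_add_of_nonneg_right hcyc
      obtain ⟨a', ω'', h1, h2, h3, h4, h5, h6⟩ := ih (a - (j - i)) (by omega) ω'
      refine ⟨a', ω'', by omega, h2, fun _ => h3 (by omega), by rw [h4, h0],
        by rw [h5, hend], le_trans h6 hle⟩

lemma extend_right (M : Matrix S S (Tropical ZInf)) {g : S} (hg : en M g g = 0)
    (a c : ℕ) (hac : a ≤ c) (ω : ℕ → S) (ha : ω a = g) :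
    ∃ ω' : ℕ → S, ω' 0 = ω 0 ∧ ω' c = g ∧ wt M ω' c = wt M ω a := by
  refine ⟨fun x => if x ≤ a then ω x else g, by simp, ?_, ?_⟩
  · simp only []
    by_cases hca : c ≤ a
    · rw [if_pos hca, show c = a by omega, ha]
    · rw [if_neg hca]
  · rw [wt_split M _ a c hac]
    have h1 : wt M (fun x => if x ≤ a then ω x else g) a = wt M ω a := by
      apply Finset.sum_congr rfl
      intro x hx
      have hxa : x < a := Finset.mem_range.mp hx
      simp only [if_pos hxa.le, if_pos (Nat.succ_le_of_lt hxa)]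
    have h2 : wt M (fun x => (fun y => if y ≤ a then ω y else g) (a + x)) (c - a) = 0 := by
      apply Finset.sum_eq_zero
      intro x _
      simp only []
      have e1 : (if a + x ≤ a then ω (a + x) else g) = g := by
        by_cases h : a + x ≤ a
        · rw [if_pos h, show a + x = a by omega, ha]
        · rw [if_neg h]
      have e2 : (if a + (x + 1) ≤ a then ω (a + (x+1)) else g) = g := by
        rw [if_neg (by omega)]
      rw [e1, e2, hg]
    rw [h1, h2, add_zero]

lemma extend_left (M : Matrix S S (Tropical ZInf)) {g : S} (hg : en M g g = 0)
    (a c : ℕ) (hac : a ≤ c) (ω : ℕ → S) (h0 : ω 0 = g) :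
    ∃ ω' : ℕ → S, ω' 0 = g ∧ ω' c = ω a ∧ wt M ω' c = wt M ω a := by
  set e := c - a with he
  refine ⟨fun x => if x < e then g else ω (x - e), ?_, ?_, ?_⟩
  · simp only []
    by_cases h : 0 < e
    · rw [if_pos h]
    · rw [if_neg h, Nat.zero_sub, h0]
  · simp only []
    rw [if_neg (by omega), show c - e = a by omega]
  · rw [wt_split M _ e c (by omega)]
    have h1 : wt M (fun x => if x < e then g else ω (x - e)) e = 0 := by
      apply Finset.sum_eq_zero
      intro x hx
      have hxe : x < e := Finset.mem_range.mp hx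
      simp only [if_pos hxe]
      have e2 : (if x + 1 < e then g else ω (x + 1 - e)) = g := by
        by_cases h : x + 1 < e
        · rw [if_pos h]
        · rw [if_neg h, show x + 1 - e = 0 by omega, h0]
      rw [e2, hg]
    have h2 : wt M (fun x => (fun y => if y < e then g else ω (y - e)) (e + x)) (c - e) =
        wt M ω a := by
      rw [show c - e = a by omega]
      apply Finset.sum_congr rfl
      intro x _
      simp only [if_neg (by omega : ¬ e + x < e), if_neg (by omega : ¬ e + (x+1) < e)]
      rw [show e + x - e = x by omega, show e + (x + 1) - e = x + 1 by omega]
    rw [h1, h2, zero_add]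

lemma pad_right [Nonempty S] (M : Matrix S S (Tropical ZInf))
    (hdiag : ∀ j, 1 ≤ j → ∀ τ : S, 0 ≤ en (M ^ j) τ τ) {g : S} (hg : en M g g = 0)
    (a : ℕ) (ω : ℕ → S) (ha : ω a = g) :
    en (M ^ Fintype.card S) (ω 0) g ≤ wt M ω a := by
  obtain ⟨a', ω', h1, h2, h3, h4, h5, h6⟩ := compress M hdiag a ω
  obtain ⟨ω'', g0, gc, gw⟩ := extend_right M hg a' (Fintype.card S) h2 ω' (by rw [h5, ha])
  have := wt_sound M (Fintype.card S) ω''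
  rw [g0, gc, gw, h4] at this
  exact le_trans this h6

lemma pad_left [Nonempty S] (M : Matrix S S (Tropical ZInf))
    (hdiag : ∀ j, 1 ≤ j → ∀ τ : S, 0 ≤ en (M ^ j) τ τ) {g : S} (hg : en M g g = 0)
    (a : ℕ) (ω : ℕ → S) (h0 : ω 0 = g) :
    en (M ^ Fintype.card S) g (ω a) ≤ wt M ω a := by
  obtain ⟨a', ω', h1, h2, h3, h4, h5, h6⟩ := compress M hdiag a ω
  obtain ⟨ω'', g0, gc, gw⟩ := extend_left M hg a' (Fintype.card S) h2 ω' (by rw [h4, h0])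
  have := wt_sound M (Fintype.card S) ω''
  rw [g0, gc, gw, h5] at this
  exact le_trans this h6

lemma shrink [Nonempty S] (M : Matrix S S (Tropical ZInf))
    (hdiag : ∀ j, 1 ≤ j → ∀ τ : S, 0 ≤ en (M ^ j) τ τ) :
    ∀ k, 1 ≤ k → ∀ τ : S, en (M ^ k) τ τ ≤ 0 →
      ∃ l, 1 ≤ l ∧ l ≤ Fintype.card S ∧ en (M ^ l) τ τ ≤ 0 := by
  intro k hk τ hle
  obtain ⟨ω, h0, hkτ, hwt⟩ := wt_complete M k hk τ τ
  obtain ⟨a', ω', _, haN, h1, h0', hend, hle'⟩ := compress M hdiag k ω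
  refine ⟨a', h1 hk, haN, ?_⟩
  have hs := wt_sound M a' ω'
  rw [h0', hend, h0, hkτ] at hs
  calc en (M ^ a') τ τ ≤ wt M ω' a' := hs
    _ ≤ wt M ω k := hle'
    _ = en (M ^ k) τ τ := hwt
    _ ≤ 0 := hle

lemma one_le_of_pos {c : ZInf} (hc : ¬ c ≤ 0) : (1 : ZInf) ≤ c := by
  rcases c with _ | v
  · exact le_top
  · have : ¬ (v : ZInf) ≤ ((0 : ℤ) : ZInf) := hc
    rw [WithTop.coe_le_coe] at this
    exact le_trans (by norm_num) (WithTop.coe_le_coe.mpr (by omega : (1:ℤ) ≤ v))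

lemma master [Nonempty S] (D : Matrix S S (Tropical ZInf))
    (hdiag : ∀ j, 1 ≤ j → ∀ τ : S, 0 ≤ en (D ^ j) τ τ)
    (hzero : ∀ τ : S, ∀ j, 1 ≤ j → en (D ^ j) τ τ ≤ 0 → en D τ τ = 0)
    (μ : ℤ) (hμ : μ ≤ 0) (hμle : ∀ s r : S, (μ : ZInf) ≤ en D s r) :
    ∀ k (ω : ℕ → S),
      (∃ g : S, en D g g = 0 ∧
        en (D ^ Fintype.card S) (ω 0) g + en (D ^ Fintype.card S) g (ω k) ≤ wt D ω k) ∨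
      (((k / Fintype.card S : ℕ) + (Fintype.card S : ℤ) * μ : ℤ) : ZInf) ≤ wt D ω k := by
  have hN : 0 < Fintype.card S := Fintype.card_pos
  set N := Fintype.card S with hNdef
  intro k
  induction k using Nat.strong_induction_on with
  | _ k ih =>
    intro ω
    by_cases hk : k < N
    · right
      rw [Nat.div_eq_of_lt hk]
      have h1 : ∀ x ∈ Finset.range k, (μ : ZInf) ≤ en D (ω x) (ω (x+1)) :=
        fun x _ => hμle _ _
      have h2 : ((k • μ : ℤ) : ZInf) ≤ wt D ω k := by
        have hs := Finset.sum_le_sum h1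
        rw [Finset.sum_const, Finset.card_range] at hs
        rwa [WithTop.coe_nsmul]
      refine le_trans (WithTop.coe_le_coe.mpr ?_) h2
      have : (N : ℤ) * μ ≤ (k : ℤ) * μ :=
        mul_le_mul_of_nonpos_right (by exact_mod_cast hk.le) hμ
      rw [nsmul_eq_mul]
      push_cast
      linarith
    · obtain ⟨i, j, hij, hjN, hrep⟩ := exists_repeat ω
      have hja : j ≤ k := by omega
      set d := j - i with hd
      obtain ⟨ω', h0, hend, heq⟩ := wt_cut D ω i j k hij hja hrep
      set cyc := wt D (fun x => ω (i + x)) d with hcyc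
      have hsound : en (D ^ d) (ω i) (ω i) ≤ cyc := by
        have hs := wt_sound D d (fun x => ω (i + x))
        simp only [Nat.add_zero] at hs
        rw [show i + d = j by omega, ← hrep] at hs
        exact hs
      by_cases hc : cyc ≤ 0
      · left
        have hz : en D (ω i) (ω i) = 0 := hzero _ d (by omega) (le_trans hsound hc)
        refine ⟨ω i, hz, ?_⟩
        rw [wt_split D ω i k (by omega)]
        apply add_le_add
        · exact pad_right D hdiag hz i ω rfl
        · have hp := pad_left D hdiag hz (k - i) (fun x => ω (i + x)) (by simp)
          rw [show i + (k - i) = k by omega] at hp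
          exact hp
      · have hc1 : (1 : ZInf) ≤ cyc := one_le_of_pos hc
        rcases ih (k - d) (by omega) ω' with ⟨g, hg, hle⟩ | hle
        · left
          refine ⟨g, hg, ?_⟩
          rw [h0, hend] at hle
          rw [heq]
          exact le_trans hle (le_add_of_nonneg_right (le_trans (by norm_num) hc1))
        · right
          have hdiv : k / N ≤ (k - d) / N + 1 := by
            have h1 : k ≤ (k - d) + N := by omega
            calc k / N ≤ ((k - d) + N) / N := Nat.div_le_div_right h1
              _ = (k - d) / N + 1 := Nat.add_div_right _ hN
          have hstep : ((↑(k / N) + (N : ℤ) * μ : ℤ) : ZInf) ≤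
              ((↑((k - d) / N) + (N : ℤ) * μ : ℤ) : ZInf) + 1 := by
            have : ((↑(k / N) + (N : ℤ) * μ : ℤ)) ≤ (↑((k - d) / N) + (N : ℤ) * μ) + 1 := by
              have : (↑(k / N) : ℤ) ≤ ↑((k - d) / N) + 1 := by exact_mod_cast hdiv
              linarith
            calc ((↑(k / N) + (N : ℤ) * μ : ℤ) : ZInf)
                ≤ (((↑((k - d) / N) + (N : ℤ) * μ) + 1 : ℤ) : ZInf) := WithTop.coe_le_coe.mpr this
              _ = ((↑((k - d) / N) + (N : ℤ) * μ : ℤ) : ZInf) + ((1 : ℤ) : ZInf) := by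
                  rw [← WithTop.coe_add]
              _ = _ := by norm_num
          calc ((↑(k / N) + (N : ℤ) * μ : ℤ) : ZInf)
              ≤ ((↑((k - d) / N) + (N : ℤ) * μ : ℤ) : ZInf) + 1 := hstep
            _ ≤ wt D ω' (k - d) + cyc := add_le_add hle hc1
            _ = wt D ω k := heq.symm

end Pump

/-- **Pumping grounded pairs.** For every `n` there is `M₀` such that for all `m ≥ M₀` and
all `s, r`: (1) if `(s, r)` is not grounded then `(A^{2𝔪⬝m})_{s,r} > n`; (2) if `(s, r)` is
grounded with grounding state `g` then
`(A^{2𝔪⬝m})_{s,r} = (A^{2𝔪⬝M₀})_{s,r} = (A^𝔪)_{s,g} + (A^𝔪)_{g,r}`, and moreover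
`(A^{2𝔪⬝m'})_{s,r} ≤ (A^𝔪)_{s,g} + (A^𝔪)_{g,r}` for every `m' ≥ 1`. -/
theorem pumping_grounded_pairs {S : Type*} [Fintype S] [DecidableEq S]
    (A : Matrix S S (Tropical ZInf)) (s₀ : S) (hA : IsStableCycle A s₀) (n : ℕ) :
    ∃ M₀ : ℕ, ∀ m : ℕ, M₀ ≤ m → ∀ s r : S,
      ((s, r) ∉ GrnPairs A → (n : ZInf) < en (A ^ (2 * mfac S * m)) s r) ∧
      ((s, r) ∈ GrnPairs A → ∀ g : S, IsGroundingState A s r g →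
        en (A ^ (2 * mfac S * m)) s r = en (A ^ (2 * mfac S * M₀)) s r ∧
        en (A ^ (2 * mfac S * m)) s r = en (A ^ mfac S) s g + en (A ^ mfac S) g r ∧
        ∀ m' : ℕ, 1 ≤ m' →
          en (A ^ (2 * mfac S * m')) s r ≤ en (A ^ mfac S) s g + en (A ^ mfac S) g r) := by
  have hne : Nonempty S := ⟨s₀⟩
  have hN : 0 < Fintype.card S := Fintype.card_pos
  have hnpos : 0 < nfac S := Nat.factorial_pos _
  have hmpos : 0 < mfac S := Nat.mul_pos hN hnpos
  set N := Fintype.card S with hNdef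
  set nn := nfac S with hnn
  set D := A ^ nn with hD
  have hBD : A ^ mfac S = D ^ N := by
    rw [hD, ← pow_mul]
    congr 1
    rw [mfac, ← hnn, ← hNdef]
    ring
  have hdiagA : ∀ j, 1 ≤ j → ∀ τ : S, 0 ≤ en (A ^ j) τ τ := fun j hj τ => (hA j hj).2 τ
  have hdiagD : ∀ j, 1 ≤ j → ∀ τ : S, 0 ≤ en (D ^ j) τ τ := by
    intro j hj τ
    rw [hD, ← pow_mul]
    exact hdiagA _ (Nat.one_le_iff_ne_zero.mpr (by positivity)) τ
  have hzeroD : ∀ τ : S, ∀ j, 1 ≤ j → en (D ^ j) τ τ ≤ 0 → en D τ τ = 0 := by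
    intro τ j hj hle
    obtain ⟨l, hl1, hlN, hl⟩ := Pump.shrink D hdiagD j hj τ hle
    rw [hD, ← pow_mul] at hl
    obtain ⟨l', hl'1, hl'N, hl'⟩ := Pump.shrink A hdiagA (nn * l)
      (Nat.one_le_iff_ne_zero.mpr (by positivity)) τ hl
    obtain ⟨c, hc⟩ : l' ∣ nn := by rw [hnn, nfac]; exact Nat.dvd_factorial hl'1 hl'N
    have h1 : en (A ^ nn) τ τ ≤ 0 := by
      rw [hc, pow_mul]
      exact Pump.en_diag_pow_le _ hl' c
    exact le_antisymm (by rw [hD]; exact h1)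
      (by rw [hD]; exact hdiagA nn (by omega) τ)
  have hZsub : ∀ g : S, en D g g = 0 → en (A ^ mfac S) g g = 0 := by
    intro g hg
    rw [hBD]
    refine le_antisymm (Pump.en_diag_pow_le D (le_of_eq hg) N) ?_
    rw [← hBD]
    exact hdiagA (mfac S) (by omega) g
  set Kd : ℕ := ∑ p : S × S, (WithTop.untopD 0 (en D p.1 p.2)).natAbs with hKd
  set Kb : ℕ := ∑ p : S × S, (WithTop.untopD 0 (en (A ^ mfac S) p.1 p.2)).natAbs with hKb
  have hμle : ∀ s r : S, ((-(Kd : ℤ) : ℤ) : ZInf) ≤ en D s r := by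
    intro s r
    rcases hv : en D s r with _ | v
    · exact le_top
    · have hterm : v.natAbs ≤ Kd := by
        rw [hKd]
        have := Finset.single_le_sum (f := fun p : S × S => (WithTop.untopD 0 (en D p.1 p.2)).natAbs)
          (fun _ _ => Nat.zero_le _) (Finset.mem_univ (s, r))
        rw [hv] at this; exact this
      exact WithTop.coe_le_coe.mpr (by omega)
  have hνle : ∀ (s r : S) (v : ℤ), en (A ^ mfac S) s r = (v : ZInf) → v ≤ (Kb : ℤ) := by
    intro s r v hv
    have hterm : v.natAbs ≤ Kb := by
      rw [hKb]
      have := Finset.single_le_sum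
        (f := fun p : S × S => (WithTop.untopD 0 (en (A ^ mfac S) p.1 p.2)).natAbs)
        (fun _ _ => Nat.zero_le _) (Finset.mem_univ (s, r))
      simpa [hv] using this
    omega
  set P : ℕ := N * Kd with hP
  set M₀ : ℕ := n + 2 * Kb + P + 1 with hM₀
  -- the master dichotomy, in terms of powers of A
  have core : ∀ m : ℕ, 1 ≤ m → ∀ s r : S,
      (∃ g : S, en D g g = 0 ∧
        en (A ^ mfac S) s g + en (A ^ mfac S) g r ≤ en (A ^ (2 * mfac S * m)) s r) ∨
      (((2 * m - (P : ℤ) : ℤ)) : ZInf) ≤ en (A ^ (2 * mfac S * m)) s r := by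
    intro m hm s r
    have hk1 : 1 ≤ 2 * N * m := Nat.one_le_iff_ne_zero.mpr (by positivity)
    have hpow : A ^ (2 * mfac S * m) = D ^ (2 * N * m) := by
      rw [hD, ← pow_mul]
      congr 1
      rw [mfac, ← hnn, ← hNdef]
      ring
    obtain ⟨ω, h0, hk, hwt⟩ := Pump.wt_complete D (2 * N * m) hk1 s r
    rcases Pump.master D hdiagD hzeroD (-(Kd : ℤ)) (by omega) hμle (2 * N * m) ω with
      ⟨g, hg, hle⟩ | hle
    · left
      refine ⟨g, hg, ?_⟩
      rw [h0, hk, hwt, ← hNdef] at hle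
      rw [hpow, ← hBD] at *
      exact hle
    · right
      rw [hwt, ← hpow] at hle
      refine le_trans (WithTop.coe_le_coe.mpr ?_) hle
      rw [show 2 * N * m = N * (2 * m) by ring, Nat.mul_div_cancel_left _ hN]
      rw [hP]
      push_cast
      linarith
  refine ⟨M₀, ?_⟩
  intro m hm s r
  constructor
  · -- ungrounded
    intro hng
    rcases core m (by omega) s r with ⟨g, hg, hle⟩ | hle
    · have hgm : g ∈ MinStates (A ^ mfac S) := hZsub g hg
      have : en (A ^ mfac S) s g + en (A ^ mfac S) g r = ⊤ := by
        by_contra htop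
        apply hng
        refine ⟨g, hgm, ?_, ?_⟩ <;>
        · rw [lt_top_iff_ne_top]
          intro h
          apply htop
          simp [h]
      rw [this, top_le_iff] at hle
      rw [hle]
      exact WithTop.coe_lt_top _  -- (n : ZInf) < ⊤ ?
    · refine lt_of_lt_of_le ?_ hle
      have : ((n : ℤ) : ZInf) < (((2 * m - (P : ℤ)) : ℤ) : ZInf) := by
        rw [WithTop.coe_lt_coe]
        omega
      simpa using this
  · -- grounded
    intro hgr g₀ hgs
    obtain ⟨hg₀min, hfin1, hfin2, hmin⟩ := hgs
    -- upper bound for all m' ≥ 1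
    have hub : ∀ m' : ℕ, 1 ≤ m' → en (A ^ (2 * mfac S * m')) s r ≤
        en (A ^ mfac S) s g₀ + en (A ^ mfac S) g₀ r := by
      intro m' hm'
      obtain ⟨t, rfl⟩ : ∃ t, m' = t + 1 := ⟨m' - 1, by omega⟩
      have hsplit : A ^ (2 * mfac S * (t + 1)) =
          A ^ mfac S * ((A ^ mfac S) ^ (2 * (t + 1) - 2) * A ^ mfac S) := by
        rw [show 2 * (t + 1) - 2 = 2 * t by omega]
        rw [← pow_mul, ← pow_add, ← pow_add]
        congr 1
        ring
      rw [hsplit]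
      calc en (A ^ mfac S * ((A ^ mfac S) ^ (2 * (t+1) - 2) * A ^ mfac S)) s r
          ≤ en (A ^ mfac S) s g₀ + en ((A ^ mfac S) ^ (2 * (t+1) - 2) * A ^ mfac S) g₀ r :=
            Pump.en_mul_le _ _ _ _ _
        _ ≤ en (A ^ mfac S) s g₀ +
            (en ((A ^ mfac S) ^ (2 * (t+1) - 2)) g₀ g₀ + en (A ^ mfac S) g₀ r) :=
            add_le_add_right (Pump.en_mul_le _ _ _ _ _) _
        _ ≤ en (A ^ mfac S) s g₀ + (0 + en (A ^ mfac S) g₀ r) := by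
            apply add_le_add_right
            apply add_le_add_left
            exact Pump.en_diag_pow_le _ (le_of_eq hg₀min) _
        _ = en (A ^ mfac S) s g₀ + en (A ^ mfac S) g₀ r := by rw [zero_add]
    -- exact value for all m'' ≥ M₀
    have hval : ∀ m'' : ℕ, M₀ ≤ m'' → en (A ^ (2 * mfac S * m'')) s r =
        en (A ^ mfac S) s g₀ + en (A ^ mfac S) g₀ r := by
      intro m'' hm''
      have hub' := hub m'' (by omega)
      refine le_antisymm hub' ?_
      rcases core m'' (by omega) s r with ⟨g, hg, hle⟩ | hle
      · exact le_trans (hmin g (hZsub g hg)) hle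
      · exfalso
        obtain ⟨v1, hv1⟩ := WithTop.ne_top_iff_exists.mp (lt_top_iff_ne_top.mp hfin1)
        obtain ⟨v2, hv2⟩ := WithTop.ne_top_iff_exists.mp (lt_top_iff_ne_top.mp hfin2)
        have hb1 := hνle s g₀ v1 hv1.symm
        have hb2 := hνle g₀ r v2 hv2.symm
        have : (((2 * m'' - (P : ℤ)) : ℤ) : ZInf) ≤ (((v1 + v2) : ℤ) : ZInf) := by
          refine le_trans hle (le_trans hub' ?_)
          rw [← hv1, ← hv2, WithTop.coe_add]
        rw [WithTop.coe_le_coe] at this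
        omega
    exact ⟨by rw [hval m hm, hval M₀ le_rfl], hval m hm, hub⟩
end

section
/- Let A ∈ ℤ∞^{S×S} be a stable-cycle matrix with baseline s₀. Then for every m ≥ 1, the matrix A^{2𝔪·m} is also a stable-cycle matrix with baseline s₀, and stab(A^{2𝔪·m}) = stab(A), i.e., for all s,r ∈ S the (s,r) entry of stab(A^{2𝔪·m}) equals the (s,r) entry of stab(A) (including ∞ entries). -/
set_option linter.unusedSectionVars false
set_option maxHeartbeats 1000000


/-- The stabilization `stab A`: its `(s, r)` entry is `(A^𝔪)_{s,g} + (A^𝔪)_{g,r}` where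
`g` is a grounding state of `(s, r)` if `(s, r)` is a grounded pair, and `∞` otherwise
(equivalently, the minimum of `(A^𝔪)_{s,g} + (A^𝔪)_{g,r}` over `g ∈ MinStates (A^𝔪)`). -/
noncomputable def stab {S : Type*} [Fintype S] [DecidableEq S]
    (A : Matrix S S (Tropical ZInf)) : Matrix S S (Tropical ZInf) :=
  Matrix.of fun s r =>
    Tropical.trop <|
      Finset.univ.inf fun g : S =>
        if en (A ^ mfac S) g g = 0 then en (A ^ mfac S) s g + en (A ^ mfac S) g r
        else ⊤

namespace StabAux

variable {S : Type*} [Fintype S] [DecidableEq S]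

lemma en_mul_eq_inf (M N : Matrix S S (Tropical ZInf)) (s r : S) :
    en (M * N) s r = Finset.univ.inf (fun q => en M s q + en N q r) := by
  unfold en
  rw [Matrix.mul_apply, Finset.untrop_sum']
  apply Finset.inf_congr rfl
  intro q _
  exact Tropical.untrop_mul _ _

lemma en_mul_le (M N : Matrix S S (Tropical ZInf)) (s r q : S) :
    en (M * N) s r ≤ en M s q + en N q r := by
  rw [en_mul_eq_inf]
  exact Finset.inf_le (Finset.mem_univ q)

lemma en_pow_add_le (A : Matrix S S (Tropical ZInf)) (a b : ℕ) (s r q : S) :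
    en (A ^ (a + b)) s r ≤ en (A ^ a) s q + en (A ^ b) q r := by
  rw [pow_add]; exact en_mul_le _ _ s r q

lemma en_one (s : S) : en (1 : Matrix S S (Tropical ZInf)) s s = 0 := by
  unfold en; rw [Matrix.one_apply_eq]; exact Tropical.untrop_one

lemma walk_le (A : Matrix S S (Tropical ZInf)) (n : ℕ) (f : ℕ → S) :
    en (A ^ n) (f 0) (f n) ≤ ∑ i ∈ Finset.range n, en A (f i) (f (i + 1)) := by
  induction n with
  | zero => simp [pow_zero, en_one]
  | succ n ih =>
      rw [Finset.sum_range_succ]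
      calc en (A ^ (n + 1)) (f 0) (f (n + 1))
          ≤ en (A ^ n) (f 0) (f n) + en (A ^ 1) (f n) (f (n + 1)) := en_pow_add_le A n 1 _ _ _
        _ ≤ _ := by rw [pow_one]; exact add_le_add_left ih _

lemma walk_le_shift (A : Matrix S S (Tropical ZInf)) (f : ℕ → S) (a b : ℕ) (hab : a ≤ b) :
    en (A ^ (b - a)) (f a) (f b) ≤ ∑ i ∈ Finset.Ico a b, en A (f i) (f (i + 1)) := by
  have h := walk_le A (b - a) (fun i => f (a + i))
  simp only [add_zero] at h
  rw [show a + (b - a) = b from by omega] at h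
  refine le_trans h ?_
  rw [Finset.sum_Ico_eq_sum_range]
  apply le_of_eq
  apply Finset.sum_congr rfl
  intro i _
  congr 1 <;> omega

lemma exists_walk [Nonempty S] (A : Matrix S S (Tropical ZInf)) (n : ℕ) (hn : 1 ≤ n) (s r : S) :
    ∃ f : ℕ → S, f 0 = s ∧ f n = r ∧
      (∑ i ∈ Finset.range n, en A (f i) (f (i + 1))) ≤ en (A ^ n) s r := by
  induction n generalizing r with
  | zero => omega
  | succ n ih =>
      rcases Nat.eq_zero_or_pos n with h1 | h1
      · subst h1
        refine ⟨fun i => if i = 0 then s else r, by simp, by simp, ?_⟩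
        simp [pow_one]
      · have hpow : en (A ^ (n + 1)) s r =
            Finset.univ.inf (fun q => en (A ^ n) s q + en A q r) := by
          rw [pow_succ]; exact en_mul_eq_inf _ _ s r
        obtain ⟨q, -, hq⟩ := Finset.exists_mem_eq_inf (Finset.univ : Finset S)
          Finset.univ_nonempty (fun q => en (A ^ n) s q + en A q r)
        obtain ⟨f, hf0, hfn, hfw⟩ := ih h1 q
        refine ⟨fun i => if i = n + 1 then r else f i, by simpa using hf0, by simp, ?_⟩
        rw [Finset.sum_range_succ, hpow, hq]
        have : ∀ i ∈ Finset.range n,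
            en A (if i = n + 1 then r else f i) (if i + 1 = n + 1 then r else f (i + 1))
              = en A (f i) (f (i + 1)) := by
          intro i hi
          rw [Finset.mem_range] at hi
          rw [if_neg (by omega), if_neg (by omega)]
        rw [Finset.sum_congr rfl this]
        simp only [if_neg (by omega : ¬ n = n + 1), if_pos rfl, hfn]
        exact add_le_add_left hfw _

variable {A : Matrix S S (Tropical ZInf)} {s₀ : S}

lemma diag_nonneg (hA : IsStableCycle A s₀) {n : ℕ} (hn : 1 ≤ n) (q : S) :
    0 ≤ en (A ^ n) q q := (hA n hn).2 q

/-- Descent: from a walk of length `n ≥ |S|·c` one can cut out a cycle whose length is a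
positive multiple of `c`, at most `|S|·c`, without increasing the value. -/
lemma descent (hA : IsStableCycle A s₀) (c n : ℕ) (hc : 1 ≤ c)
    (hn : Fintype.card S * c ≤ n) (s r : S) :
    ∃ e, 0 < e ∧ e ≤ Fintype.card S * c ∧ c ∣ e ∧ e ≤ n ∧
      en (A ^ (n - e)) s r ≤ en (A ^ n) s r := by
  have : Nonempty S := ⟨s₀⟩
  have hcard : 1 ≤ Fintype.card S := Fintype.card_pos
  have hn1 : 1 ≤ n := le_trans (by nlinarith) hn
  obtain ⟨f, hf0, hfn, hfw⟩ := exists_walk A n hn1 s r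
  obtain ⟨i, j, hij, hφ⟩ := Fintype.exists_ne_map_eq_of_card_lt
    (fun i : Fin (Fintype.card S + 1) => f (i * c)) (by simp)
  -- wlog i < j
  wlog hlt : (i : ℕ) < (j : ℕ) generalizing i j
  · refine this j i hij.symm hφ.symm ?_
    have hne : (i : ℕ) ≠ (j : ℕ) := fun h => hij (Fin.ext h)
    omega
  set a := (i : ℕ) * c with ha
  set b := (j : ℕ) * c with hb
  have hab : a < b := by
    exact mul_lt_mul_of_pos_right hlt (by omega)
  have hbn : b ≤ n := le_trans (Nat.mul_le_mul_right c (by omega)) hn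
  refine ⟨b - a, by omega, by
      have : b ≤ Fintype.card S * c := Nat.mul_le_mul_right c (by omega)
      omega,
    ⟨(j : ℕ) - (i : ℕ), by rw [hb, ha, ← Nat.sub_mul, Nat.mul_comm]⟩, by omega, ?_⟩
  have key1 : en (A ^ (n - (b - a))) s r ≤ en (A ^ a) s (f a) + en (A ^ (n - b)) (f a) r := by
    rw [show n - (b - a) = a + (n - b) from by omega]
    exact en_pow_add_le A a (n - b) s r (f a)
  have key2 : en (A ^ a) s (f a) ≤ ∑ x ∈ Finset.Ico 0 a, en A (f x) (f (x + 1)) := by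
    have := walk_le_shift A f 0 a (by omega)
    rw [Nat.sub_zero, hf0] at this
    exact this
  have key3 : en (A ^ (n - b)) (f a) r ≤ ∑ x ∈ Finset.Ico b n, en A (f x) (f (x + 1)) := by
    have := walk_le_shift A f b n hbn
    rw [hfn] at this
    rw [show f a = f b from hφ]
    exact this
  have key4 : (0 : ZInf) ≤ ∑ x ∈ Finset.Ico a b, en A (f x) (f (x + 1)) := by
    have h1 := walk_le_shift A f a b (le_of_lt hab)
    refine le_trans ?_ h1
    rw [show f b = f a from hφ.symm]
    exact diag_nonneg hA (by omega) (f a)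
  have hsum : (∑ x ∈ Finset.Ico 0 a, en A (f x) (f (x + 1)))
      + ((∑ x ∈ Finset.Ico a b, en A (f x) (f (x + 1)))
        + (∑ x ∈ Finset.Ico b n, en A (f x) (f (x + 1))))
      = ∑ i ∈ Finset.range n, en A (f i) (f (i + 1)) := by
    rw [← add_assoc, Finset.sum_Ico_consecutive _ (by omega) (le_of_lt hab),
      Finset.sum_Ico_consecutive _ (by omega) hbn, Finset.range_eq_Ico]
  calc en (A ^ (n - (b - a))) s r
      ≤ en (A ^ a) s (f a) + en (A ^ (n - b)) (f a) r := key1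
    _ ≤ (∑ x ∈ Finset.Ico 0 a, en A (f x) (f (x + 1)))
        + (∑ x ∈ Finset.Ico b n, en A (f x) (f (x + 1))) := add_le_add key2 key3
    _ ≤ (∑ x ∈ Finset.Ico 0 a, en A (f x) (f (x + 1)))
        + ((∑ x ∈ Finset.Ico a b, en A (f x) (f (x + 1)))
          + (∑ x ∈ Finset.Ico b n, en A (f x) (f (x + 1)))) := by
        apply add_le_add_right
        exact le_add_of_nonneg_left key4
    _ = ∑ i ∈ Finset.range n, en A (f i) (f (i + 1)) := hsum
    _ ≤ en (A ^ n) s r := hfw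


/-- Zero diagonal propagates to positive multiples. -/
lemma zero_diag_mul (hA : IsStableCycle A s₀) {c : ℕ} (hc : 1 ≤ c) {g : S}
    (hg : en (A ^ c) g g = 0) : ∀ t : ℕ, 1 ≤ t → en (A ^ (t * c)) g g = 0 := by
  intro t ht
  induction t with
  | zero => omega
  | succ t ih =>
      rcases Nat.eq_zero_or_pos t with h | h
      · subst h; simpa using hg
      · have h1 : en (A ^ ((t + 1) * c)) g g ≤ en (A ^ (t * c)) g g + en (A ^ c) g g := by
          rw [show (t + 1) * c = t * c + c from by ring]
          exact en_pow_add_le A (t * c) c g g g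
        rw [ih h, hg, add_zero] at h1
        exact le_antisymm h1 (diag_nonneg hA (Nat.mul_pos (Nat.succ_pos t) hc) g)

/-- Any state with a zero cycle has a short zero cycle. -/
lemma exists_short_zero_cycle (hA : IsStableCycle A s₀) {g : S} {N : ℕ} (hN : 1 ≤ N)
    (hg : en (A ^ N) g g = 0) :
    ∃ c, 1 ≤ c ∧ c ≤ Fintype.card S ∧ en (A ^ c) g g = 0 := by
  induction N using Nat.strong_induction_on with
  | _ N ih =>
    rcases le_or_gt N (Fintype.card S) with h | h
    · exact ⟨N, hN, h, hg⟩
    · obtain ⟨e, he0, heS, -, hen, hle⟩ := descent hA 1 N le_rfl (by omega) g g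
      rw [hg] at hle
      have h1 : 1 ≤ N - e := by omega
      have : en (A ^ (N - e)) g g = 0 :=
        le_antisymm hle (diag_nonneg hA h1 g)
      exact ih (N - e) (by omega) h1 this

lemma card_mul_le_mfac {c : ℕ} (hc1 : 1 ≤ c) (hc2 : c ≤ Fintype.card S) :
    Fintype.card S * c ≤ mfac S := by
  have : c ≤ nfac S := le_trans hc2 (Nat.self_le_factorial _)
  exact Nat.mul_le_mul_left _ this

lemma dvd_mfac {c : ℕ} (hc1 : 1 ≤ c) (hc2 : c ≤ Fintype.card S) : c ∣ mfac S :=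
  Dvd.dvd.mul_left (Nat.dvd_factorial hc1 hc2) _

lemma pump_core (hA : IsStableCycle A s₀) {g : S} {c : ℕ} (hc1 : 1 ≤ c)
    (hc2 : c ≤ Fintype.card S) (hg : en (A ^ c) g g = 0) (s : S) :
    ∀ N, mfac S ≤ N → c ∣ N →
      en (A ^ mfac S) s g ≤ en (A ^ N) s g ∧ en (A ^ mfac S) g s ≤ en (A ^ N) g s := by
  intro N
  induction N using Nat.strong_induction_on with
  | _ N ih =>
    intro hN hdvd
    rcases Nat.eq_or_lt_of_le hN with h | h
    · rw [← h]; exact ⟨le_rfl, le_rfl⟩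
    · obtain ⟨e, he0, heS, hce, hen, hleR⟩ := descent hA c N hc1
        (le_trans (card_mul_le_mfac hc1 hc2) (le_of_lt h)) s g
      obtain ⟨e', he0', heS', hce', hen', hleL'⟩ := descent hA c N hc1
        (le_trans (card_mul_le_mfac hc1 hc2) (le_of_lt h)) g s
      have hcm : c ∣ mfac S := dvd_mfac hc1 hc2
      constructor
      · -- right case: s → g
        rcases le_or_gt (mfac S) (N - e) with h2 | h2
        · exact le_trans ((ih (N - e) (by omega) h2 ((Nat.dvd_sub hdvd hce))).1) hleR
        · -- pad: mfac = (N - e) + (mfac - (N - e))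
          have hpos : 0 < mfac S - (N - e) := by omega
          have hdvd2 : c ∣ mfac S - (N - e) := Nat.dvd_sub hcm (Nat.dvd_sub hdvd hce)
          obtain ⟨t, ht⟩ := hdvd2
          have ht1 : 1 ≤ t := by
            rcases Nat.eq_zero_or_pos t with h0 | h0
            · rw [h0, Nat.mul_zero] at ht; omega
            · exact h0
          have hzero : en (A ^ (mfac S - (N - e))) g g = 0 := by
            rw [ht, Nat.mul_comm]; exact zero_diag_mul hA hc1 hg t ht1
          have hsplit := en_pow_add_le A (N - e) (mfac S - (N - e)) s g g
          rw [show (N - e) + (mfac S - (N - e)) = mfac S from by omega] at hsplit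
          calc en (A ^ mfac S) s g
              ≤ en (A ^ (N - e)) s g + en (A ^ (mfac S - (N - e))) g g := hsplit
            _ = en (A ^ (N - e)) s g := by rw [hzero, add_zero]
            _ ≤ en (A ^ N) s g := hleR
      · rcases le_or_gt (mfac S) (N - e') with h2 | h2
        · exact le_trans ((ih (N - e') (by omega) h2 ((Nat.dvd_sub hdvd hce'))).2) hleL'
        · have hpos : 0 < mfac S - (N - e') := by omega
          have hdvd2 : c ∣ mfac S - (N - e') := Nat.dvd_sub hcm (Nat.dvd_sub hdvd hce')
          obtain ⟨t, ht⟩ := hdvd2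
          have ht1 : 1 ≤ t := by
            rcases Nat.eq_zero_or_pos t with h0 | h0
            · rw [h0, Nat.mul_zero] at ht; omega
            · exact h0
          have hzero : en (A ^ (mfac S - (N - e'))) g g = 0 := by
            rw [ht, Nat.mul_comm]; exact zero_diag_mul hA hc1 hg t ht1
          have hsplit := en_pow_add_le A (mfac S - (N - e')) (N - e') g s g
          rw [show (mfac S - (N - e')) + (N - e') = mfac S from by omega] at hsplit
          calc en (A ^ mfac S) g s
              ≤ en (A ^ (mfac S - (N - e'))) g g + en (A ^ (N - e')) g s := hsplit
            _ = en (A ^ (N - e')) g s := by rw [hzero, zero_add]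
            _ ≤ en (A ^ N) g s := hleL'


lemma mfac_pos [Nonempty S] : 1 ≤ mfac S :=
  Nat.mul_pos Fintype.card_pos (Nat.factorial_pos _)

lemma min_iff (hA : IsStableCycle A s₀) {j : ℕ} (hj : 1 ≤ j) (g : S) :
    en (A ^ (j * mfac S)) g g = 0 ↔ en (A ^ mfac S) g g = 0 := by
  have : Nonempty S := ⟨s₀⟩
  have hm1 : 1 ≤ mfac S := mfac_pos
  constructor
  · intro h
    obtain ⟨c, hc1, hc2, hc0⟩ := exists_short_zero_cycle hA
      (Nat.mul_pos hj hm1) h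
    have hdvd : c ∣ mfac S := dvd_mfac hc1 hc2
    have := zero_diag_mul hA hc1 hc0 (mfac S / c)
      (Nat.one_le_div_iff (by omega) |>.mpr (le_trans hc2 (by
        have : Fintype.card S ≤ mfac S := Nat.le_mul_of_pos_right _ (Nat.factorial_pos _)
        omega)))
    rwa [Nat.div_mul_cancel hdvd] at this
  · intro h
    exact zero_diag_mul hA hm1 h j hj

lemma en_eq (hA : IsStableCycle A s₀) {g : S} (hg : en (A ^ mfac S) g g = 0)
    {j : ℕ} (hj : 1 ≤ j) (s : S) :
    en (A ^ (j * mfac S)) s g = en (A ^ mfac S) s g ∧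
      en (A ^ (j * mfac S)) g s = en (A ^ mfac S) g s := by
  have : Nonempty S := ⟨s₀⟩
  have hm1 : 1 ≤ mfac S := mfac_pos
  -- ≥ direction via pump_core
  obtain ⟨c, hc1, hc2, hc0⟩ := exists_short_zero_cycle hA hm1 hg
  have hcm : c ∣ mfac S := dvd_mfac hc1 hc2
  have hge := pump_core hA hc1 hc2 hc0 s (j * mfac S)
    (Nat.le_mul_of_pos_left _ hj) (hcm.mul_left j)
  -- ≤ direction
  have hle : en (A ^ (j * mfac S)) s g ≤ en (A ^ mfac S) s g ∧
      en (A ^ (j * mfac S)) g s ≤ en (A ^ mfac S) g s := by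
    rcases Nat.eq_or_lt_of_le hj with h1 | h1
    · rw [← h1, one_mul]; exact ⟨le_rfl, le_rfl⟩
    · have hz : en (A ^ ((j - 1) * mfac S)) g g = 0 :=
        zero_diag_mul hA hm1 hg (j - 1) (by omega)
      have hsplit : mfac S + (j - 1) * mfac S = j * mfac S := by
        have := Nat.sub_mul j 1 (mfac S)
        have h3 : mfac S ≤ j * mfac S := Nat.le_mul_of_pos_left _ (by omega)
        omega
      constructor
      · have h2 := en_pow_add_le A (mfac S) ((j - 1) * mfac S) s g g
        rw [hsplit, hz, add_zero] at h2
        exact h2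
      · have h2 := en_pow_add_le A ((j - 1) * mfac S) (mfac S) g s g
        rw [Nat.add_comm, hsplit, hz, zero_add] at h2
        exact h2
  exact ⟨le_antisymm hle.1 hge.1, le_antisymm hle.2 hge.2⟩

end StabAux

/-- **Cactus letters stabilize at `2𝔪`**: for every `m ≥ 1`, `A^{2𝔪⬝m}` is again a
stable-cycle matrix with the same baseline, and its stabilization coincides with that of
`A` (including `∞` entries). -/


theorem stab_pow_eq_stab {S : Type*} [Fintype S] [DecidableEq S]
    (A : Matrix S S (Tropical ZInf)) (s₀ : S) (hA : IsStableCycle A s₀)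
    (m : ℕ) (hm : 1 ≤ m) :
    IsStableCycle (A ^ (2 * mfac S * m)) s₀ ∧ stab (A ^ (2 * mfac S * m)) = stab A := by
  have : Nonempty S := ⟨s₀⟩
  have hm1 : 1 ≤ mfac S := StabAux.mfac_pos
  have hj : 1 ≤ 2 * mfac S * m := Nat.mul_pos (Nat.mul_pos (by omega) hm1) hm
  have hstable : IsStableCycle (A ^ (2 * mfac S * m)) s₀ := by
    intro n hn
    rw [← pow_mul]
    exact hA _ (Nat.mul_pos hj hn)
  refine ⟨hstable, ?_⟩
  apply Matrix.ext
  intro s r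
  simp only [stab, Matrix.of_apply]
  congr 1
  apply Finset.inf_congr rfl
  intro g _
  rw [← pow_mul]
  have hiff := StabAux.min_iff hA hj g
  by_cases hg : en (A ^ mfac S) g g = 0
  · rw [if_pos (hiff.mpr hg), if_pos hg,
      (StabAux.en_eq hA hg hj s).1, (StabAux.en_eq hA hg hj r).2]
  · rw [if_neg (fun h => hg (hiff.mp h)), if_neg hg]
end

section
/- Let A ∈ ℤ∞^{S×S} be a degenerate stable-cycle matrix and let C ∈ ℕ be such that every finite entry of A has absolute value at most C. Then for every k ≥ 1 and all s,r ∈ S with (A^{2𝔪·|S|·k})_{s,r} < ∞, one has |(A^{2𝔪·|S|·k})_{s,r}| ≤ 2𝔪·C. -/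
/-- A stable-cycle matrix `A` is degenerate if for every `s` and every
`t ∈ RefStates (A^{2𝔪})`, whenever `(A^{2𝔪⬝k})_{s,t} < ∞` for some `k ≥ 1`, the pair
`(s, t)` is grounded. -/
def Degenerate {S : Type*} [Fintype S] [DecidableEq S]
    (A : Matrix S S (Tropical ZInf)) : Prop :=
  ∀ s t : S, t ∈ RefStates (A ^ (2 * mfac S)) →
    (∃ k : ℕ, 1 ≤ k ∧ en (A ^ (2 * mfac S * k)) s t < ⊤) → (s, t) ∈ GrnPairs A

set_option linter.unusedSectionVars false

section

variable {S : Type*} [Fintype S] [DecidableEq S]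

lemma en_mul_le (A B : Matrix S S (Tropical ZInf)) (x y z : S) :
    en (A * B) x z ≤ en A x y + en B y z := by
  rw [en, Matrix.mul_apply, Finset.untrop_sum']
  exact (Finset.inf_le (Finset.mem_univ y)).trans_eq (by simp [en, Tropical.untrop_mul])

lemma en_mul_exists [Nonempty S] (A B : Matrix S S (Tropical ZInf)) (x z : S) :
    ∃ y, en (A * B) x z = en A x y + en B y z := by
  rw [en, Matrix.mul_apply, Finset.untrop_sum']
  obtain ⟨y, -, hy⟩ := Finset.exists_mem_eq_inf Finset.univ Finset.univ_nonempty
    (fun y => Tropical.untrop (A x y * B y z))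
  refine ⟨y, ?_⟩
  rw [show (Tropical.untrop ∘ fun j => A x j * B j z) =
    (fun y => Tropical.untrop (A x y * B y z)) from rfl, hy, Tropical.untrop_mul]
  rfl

lemma en_one_diag (x : S) : en (1 : Matrix S S (Tropical ZInf)) x x = 0 := by
  rw [en, Matrix.one_apply_eq, Tropical.untrop_one]

lemma en_one_ne (x y : S) (h : x ≠ y) : en (1 : Matrix S S (Tropical ZInf)) x y = ⊤ := by
  rw [en, Matrix.one_apply_ne h, Tropical.untrop_zero]

lemma en_tri (A : Matrix S S (Tropical ZInf)) (a b : ℕ) (x y z : S) :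
    en (A ^ (a + b)) x z ≤ en (A ^ a) x y + en (A ^ b) y z := by
  rw [pow_add]; exact en_mul_le _ _ x y z
end

section
variable {S : Type*} [Fintype S] [DecidableEq S] (A : Matrix S S (Tropical ZInf))

/-- weight of the length-`n` walk `p 0, p 1, ..., p n`. -/
def wt (p : ℕ → S) (n : ℕ) : ZInf := ∑ i ∈ Finset.range n, en A (p i) (p (i + 1))

lemma wt_zero (p : ℕ → S) : wt A p 0 = 0 := by simp [wt]

lemma wt_succ_front (p : ℕ → S) (n : ℕ) :
    wt A p (n + 1) = en A (p 0) (p 1) + wt A (fun i => p (i + 1)) n := by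
  rw [wt, Finset.sum_range_succ', add_comm]; rfl

lemma wt_add (p : ℕ → S) (a t : ℕ) :
    wt A p (a + t) = wt A p a + wt A (fun j => p (a + j)) t := by
  induction t with
  | zero => simp [wt]
  | succ t ih =>
      have h1 : wt A p (a + (t+1)) = wt A p (a+t) + en A (p (a+t)) (p (a+t+1)) := by
        rw [show a+(t+1) = (a+t)+1 from rfl, wt, Finset.sum_range_succ]; rfl
      have h2 : wt A (fun j => p (a+j)) (t+1)
          = wt A (fun j => p (a+j)) t + en A (p (a+t)) (p (a+t+1)) := by
        rw [wt, Finset.sum_range_succ]; rfl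
      rw [h1, ih, h2, add_assoc]

lemma en_pow_le_wt : ∀ n, ∀ p : ℕ → S, en (A ^ n) (p 0) (p n) ≤ wt A p n := by
  intro n
  induction n with
  | zero => intro p; simp [pow_zero, en_one_diag, wt_zero]
  | succ n ih =>
      intro p
      rw [wt_succ_front]
      calc en (A ^ (n+1)) (p 0) (p (n+1)) = en (A * A ^ n) (p 0) (p (n+1)) := by
            rw [pow_succ']
        _ ≤ en A (p 0) (p 1) + en (A ^ n) (p 1) (p (n+1)) := en_mul_le _ _ _ _ _
        _ ≤ en A (p 0) (p 1) + wt A (fun i => p (i+1)) n := by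
            have := ih (fun i => p (i + 1))
            exact add_le_add_right this _

lemma exists_walk : ∀ (n : ℕ) (x y : S), en (A ^ n) x y < ⊤ →
    ∃ p : ℕ → S, p 0 = x ∧ p n = y ∧ wt A p n ≤ en (A ^ n) x y := by
  intro n
  induction n with
  | zero =>
      intro x y h
      have hxy : x = y := by
        by_contra hne
        rw [pow_zero, en_one_ne x y hne] at h; exact lt_irrefl _ h
      subst hxy
      exact ⟨fun _ => x, rfl, rfl, by rw [wt_zero, pow_zero, en_one_diag]⟩
  | succ n ih =>
      intro x y h
      have : Nonempty S := ⟨x⟩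
      rw [pow_succ'] at h ⊢
      obtain ⟨t, ht⟩ := en_mul_exists A (A ^ n) x y
      rw [ht] at h ⊢
      have h12 := WithTop.add_lt_top.1 h
      have h1 : en A x t < ⊤ := h12.1
      have h2 : en (A ^ n) t y < ⊤ := h12.2
      obtain ⟨q, hq0, hqn, hqw⟩ := ih t y h2
      refine ⟨fun i => if i = 0 then x else q (i - 1), by simp, by simp [hqn], ?_⟩
      rw [wt_succ_front]
      have heq : (fun i => if i + 1 = 0 then x else q (i + 1 - 1)) = q := by
        funext i; simp
      have heq2 : (fun i => q (i + 1 - 1)) = q := by funext i; simp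
      simpa [heq, heq2, hq0] using add_le_add_right hqw (en A x t)


lemma wt_del (p : ℕ → S) (a d t : ℕ) (hpa : p a = p (a + d)) :
    wt A (fun i => if i < a then p i else p (i + d)) (a + t)
      = wt A p a + wt A (fun j => p (a + d + j)) t := by
  set q := fun i => if i < a then p i else p (i + d) with hqdef
  have h1 : wt A q (a + t) = wt A q a + wt A (fun j => q (a + j)) t := wt_add A q a t
  have h2 : wt A q a = wt A p a := by
    refine Finset.sum_congr rfl (fun i hi => ?_)
    rw [Finset.mem_range] at hi
    have e1 : q i = p i := if_pos hi
    have e2 : q (i+1) = p (i+1) := by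
      by_cases h : i + 1 < a
      · exact if_pos h
      · have hia : i + 1 = a := by omega
        show (if i + 1 < a then p (i+1) else p (i + 1 + d)) = p (i+1)
        rw [if_neg h, hia, ← hpa]
    rw [e1, e2]
  have h3 : (fun j => q (a + j)) = (fun j => p (a + d + j)) := by
    funext j
    have : ¬ (a + j < a) := by omega
    show (if a + j < a then p (a+j) else p (a + j + d)) = p (a + d + j)
    rw [if_neg this]
    congr 1
    omega
  rw [h1, h2, h3]

lemma wt_split3 (p : ℕ → S) (a d t : ℕ) :
    wt A p (a + d + t)
      = wt A p a + wt A (fun j => p (a + j)) d + wt A (fun j => p (a + d + j)) t := by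
  rw [wt_add A p (a+d) t, wt_add A p a d]

lemma pigeon (p : ℕ → S) (ℓ : ℕ) (hl : 1 ≤ ℓ) :
    ∃ a b, a < b ∧ b ≤ Fintype.card S * ℓ ∧ p a = p b ∧ ℓ ∣ (b - a) := by
  classical
  have hcard : Fintype.card (S × Fin ℓ) < Fintype.card (Fin (Fintype.card S * ℓ + 1)) := by
    simp [Fintype.card_prod]
  obtain ⟨i, j, hne, heq⟩ := Fintype.exists_ne_map_eq_of_card_lt
    (fun i : Fin (Fintype.card S * ℓ + 1) => (p i.val, (⟨i.val % ℓ, Nat.mod_lt _ hl⟩ : Fin ℓ)))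
    hcard
  have hp : p i.val = p j.val := congrArg Prod.fst heq
  have hm : i.val % ℓ = j.val % ℓ := by
    have := congrArg Prod.snd heq
    simpa using congrArg Fin.val this
  have hvne : i.val ≠ j.val := fun h => hne (Fin.ext h)
  rcases Nat.lt_or_ge i.val j.val with h | h
  · exact ⟨i.val, j.val, h, by omega, hp, (Nat.modEq_iff_dvd' h.le).mp hm⟩
  · have h' : j.val < i.val := by omega
    exact ⟨j.val, i.val, h', by omega, hp.symm, (Nat.modEq_iff_dvd' h'.le).mp hm.symm⟩

lemma reduce (hdiag : ∀ (n : ℕ) (r : S), 0 ≤ en (A ^ n) r r) (ℓ : ℕ) (hl : 1 ≤ ℓ) :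
    ∀ (n : ℕ) (p : ℕ → S), ∃ (e : ℕ) (q : ℕ → S), q 0 = p 0 ∧ q e = p n ∧
      e ≤ n ∧ e ≤ Fintype.card S * ℓ ∧ ℓ ∣ (n - e) ∧ (0 < n → 0 < e) ∧
      wt A q e ≤ wt A p n := by
  intro n
  induction n using Nat.strong_induction_on with
  | _ n ih =>
    intro p
    by_cases hbase : n ≤ Fintype.card S * ℓ
    · exact ⟨n, p, rfl, rfl, le_refl n, hbase, by simp, fun h => h, le_refl _⟩
    · push_neg at hbase
      obtain ⟨a, b, hab, hble, hpab, hdvd⟩ := pigeon p ℓ hl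
      set d := b - a with hd
      have hd1 : 1 ≤ d := by omega
      have hadb : a + d = b := by omega
      have hn : n = a + d + (n - b) := by omega
      set t := n - b with ht
      have hpa : p a = p (a + d) := by rw [hadb]; exact hpab
      set q1 := fun i => if i < a then p i else p (i + d) with hq1
      have hq10 : q1 0 = p 0 := by
        by_cases h0 : 0 < a
        · exact if_pos h0
        · have ha0 : a = 0 := by omega
          show (if (0:ℕ) < a then p 0 else p (0 + d)) = p 0
          rw [if_neg (by omega)]
          rw [show (0:ℕ) + d = a + d by omega, ← hpa, ha0]
      have hq1at : q1 (a + t) = p n := by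
        show (if a + t < a then p (a+t) else p (a + t + d)) = p n
        rw [if_neg (by omega)]
        congr 1
        omega
      have hwdel : wt A q1 (a + t) = wt A p a + wt A (fun j => p (a + d + j)) t :=
        wt_del A p a d t hpa
      have hmid : 0 ≤ wt A (fun j => p (a + j)) d := by
        have h1 := en_pow_le_wt A d (fun j => p (a + j))
        have h2 : en (A ^ d) (p (a + 0)) (p (a + d)) ≥ 0 := by
          rw [Nat.add_zero, hpa]
          exact hdiag d (p (a+d))
        exact le_trans (by simpa using h2) h1
      have hwle : wt A q1 (a + t) ≤ wt A p n := by
        rw [hwdel]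
        conv_rhs => rw [hn, wt_split3]
        calc wt A p a + wt A (fun j => p (a + d + j)) t
            = wt A p a + 0 + wt A (fun j => p (a + d + j)) t := by rw [add_zero]
          _ ≤ wt A p a + wt A (fun j => p (a + j)) d + wt A (fun j => p (a + d + j)) t := by
              gcongr
      have hlt : a + t < n := by omega
      obtain ⟨e, q, hq0, hqe, hel, helS, hedvd, hepos, hqw⟩ := ih (a + t) hlt q1
      refine ⟨e, q, by rw [hq0, hq10], by rw [hqe, hq1at], by omega, helS, ?_, ?_, le_trans hqw hwle⟩
      · obtain ⟨u, hu⟩ := hdvd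
        obtain ⟨v, hv⟩ := hedvd
        have : n - e = ℓ * u + ℓ * v := by omega
        rw [this]
        exact Dvd.dvd.add (Dvd.intro u rfl) (Dvd.intro v rfl)
      · intro _
        exact hepos (by omega)


lemma en_edge_bounds (C : ℕ) (hC : ∀ (s r : S) (c : ℤ), en A s r = (c : ZInf) → c.natAbs ≤ C)
    (x y : S) (h : en A x y ≠ ⊤) :
    ((-(C : ℤ) : ℤ) : ZInf) ≤ en A x y ∧ en A x y ≤ ((C : ℤ) : ZInf) := by
  obtain ⟨cz, hcz⟩ := WithTop.ne_top_iff_exists.mp h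
  have hb := hC x y cz hcz.symm
  rw [← hcz]
  exact ⟨WithTop.coe_le_coe.mpr (by omega), WithTop.coe_le_coe.mpr (by omega)⟩

lemma wt_bounds (C : ℕ) (hC : ∀ (s r : S) (c : ℤ), en A s r = (c : ZInf) → c.natAbs ≤ C)
    (p : ℕ → S) : ∀ n, wt A p n ≠ ⊤ →
      ((-((n * C : ℕ) : ℤ) : ℤ) : ZInf) ≤ wt A p n ∧ wt A p n ≤ (((n * C : ℕ) : ℤ) : ZInf) := by
  intro n
  induction n with
  | zero => intro _; simp [wt_zero]
  | succ n ih =>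
      intro h
      have hsp : wt A p (n+1) = wt A p n + en A (p n) (p (n+1)) := by
        rw [wt, Finset.sum_range_succ]; rfl
      have hn : wt A p n ≠ ⊤ := by
        intro h'; rw [hsp, h', top_add] at h; exact h rfl
      have he : en A (p n) (p (n+1)) ≠ ⊤ := by
        intro h'; rw [hsp, h', add_top] at h; exact h rfl
      obtain ⟨ih1, ih2⟩ := ih hn
      obtain ⟨he1, he2⟩ := en_edge_bounds A C hC (p n) (p (n+1)) he
      constructor
      · have harith : ((-(((n+1) * C : ℕ) : ℤ)) : ℤ) = (-((n * C : ℕ) : ℤ)) + (-(C : ℤ)) := by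
          push_cast; ring
        rw [hsp, harith, WithTop.coe_add]
        exact add_le_add ih1 he1
      · have harith : ((((n+1) * C : ℕ) : ℤ)) = (((n * C : ℕ) : ℤ)) + ((C : ℤ)) := by
          push_cast; ring
        rw [hsp, harith, WithTop.coe_add]
        exact add_le_add ih2 he2

lemma diag_mult_le (g : S) (l : ℕ) (h : en (A ^ l) g g ≤ 0) :
    ∀ m : ℕ, en (A ^ (m * l)) g g ≤ 0 := by
  intro m
  induction m with
  | zero => rw [Nat.zero_mul, pow_zero, en_one_diag]
  | succ m ih =>
      calc en (A ^ ((m+1) * l)) g g = en (A ^ (m * l + l)) g g := by rw [Nat.succ_mul]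
        _ ≤ en (A ^ (m * l)) g g + en (A ^ l) g g := en_tri A _ _ g g g
        _ ≤ 0 + 0 := add_le_add ih h
        _ = 0 := by rw [add_zero]

lemma diag_mult_lt_top (u : S) (l : ℕ) (h : en (A ^ l) u u < ⊤) :
    ∀ m : ℕ, en (A ^ (m * l)) u u < ⊤ := by
  intro m
  induction m with
  | zero => rw [Nat.zero_mul, pow_zero, en_one_diag]; exact WithTop.coe_lt_top 0
  | succ m ih =>
      calc en (A ^ ((m+1) * l)) u u = en (A ^ (m * l + l)) u u := by rw [Nat.succ_mul]
        _ ≤ en (A ^ (m * l)) u u + en (A ^ l) u u := en_tri A _ _ u u u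
        _ < ⊤ := WithTop.add_lt_top.mpr ⟨ih, h⟩

lemma en_fin_le (C : ℕ) (hC : ∀ (s r : S) (c : ℤ), en A s r = (c : ZInf) → c.natAbs ≤ C)
    (n : ℕ) (x y : S) (h : en (A ^ n) x y < ⊤) :
    en (A ^ n) x y ≤ (((n * C : ℕ) : ℤ) : ZInf) := by
  obtain ⟨p, hp0, hpn, hpw⟩ := exists_walk A n x y h
  have hne : wt A p n ≠ ⊤ := (lt_of_le_of_lt hpw h).ne
  have hup := (wt_bounds A C hC p n hne).2
  calc en (A ^ n) x y = en (A ^ n) (p 0) (p n) := by rw [hp0, hpn]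
    _ ≤ wt A p n := en_pow_le_wt A n p
    _ ≤ _ := hup

lemma small_zero_cycle (hdiag : ∀ (n : ℕ) (r : S), 0 ≤ en (A ^ n) r r)
    (m : ℕ) (hm : 0 < m) (g : S) (hg : en (A ^ m) g g = 0) :
    ∃ l, 0 < l ∧ l ≤ Fintype.card S ∧ en (A ^ l) g g ≤ 0 := by
  have hfin : en (A ^ m) g g < ⊤ := by rw [hg]; exact WithTop.coe_lt_top 0
  obtain ⟨p, hp0, hpm, hpw⟩ := exists_walk A m g g hfin
  obtain ⟨e, q, hq0, hqe, _, heS, _, hepos, hqw⟩ := reduce A hdiag 1 le_rfl m p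
  refine ⟨e, hepos hm, by simpa using heS, ?_⟩
  calc en (A ^ e) g g = en (A ^ e) (q 0) (q e) := by rw [hq0, hqe, hp0, hpm]
    _ ≤ wt A q e := en_pow_le_wt A e q
    _ ≤ wt A p m := hqw
    _ ≤ en (A ^ m) g g := hpw
    _ = 0 := hg

lemma bounded_from_min (hdiag : ∀ (n : ℕ) (r : S), 0 ≤ en (A ^ n) r r)
    (C : ℕ) (hC : ∀ (s r : S) (c : ℤ), en A s r = (c : ZInf) → c.natAbs ≤ C)
    (g : S) (l : ℕ) (hl1 : 0 < l) (hlS : l ≤ Fintype.card S)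
    (hzero : en (A ^ l) g g ≤ 0) (n : ℕ) (v : S) (h : en (A ^ n) g v < ⊤) :
    en (A ^ n) g v ≤ (((Fintype.card S * Fintype.card S * C : ℕ) : ℤ) : ZInf) := by
  obtain ⟨p, hp0, hpn, hpw⟩ := exists_walk A n g v h
  obtain ⟨e, q, hq0, hqe, hen, heS, hedvd, _, hqw⟩ := reduce A hdiag l hl1 n p
  have hqfin : wt A q e ≠ ⊤ := (lt_of_le_of_lt (le_trans hqw hpw) h).ne
  have hup := (wt_bounds A C hC q e hqfin).2
  obtain ⟨mq, hmq⟩ := hedvd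
  have h2 : en (A ^ (n - e)) g g ≤ 0 := by
    rw [hmq, mul_comm]; exact diag_mult_le A g l hzero mq
  have h3 : en (A ^ n) g v ≤ en (A ^ (n - e)) g g + en (A ^ e) g v := by
    have hne : n - e + e = n := by omega
    conv_lhs => rw [← hne]
    exact en_tri A _ _ g g v
  have h4 : en (A ^ e) g v ≤ (((e * C : ℕ) : ℤ) : ZInf) := by
    calc en (A ^ e) g v = en (A ^ e) (q 0) (q e) := by rw [hq0, hqe, hp0, hpn]
      _ ≤ wt A q e := en_pow_le_wt A e q
      _ ≤ _ := hup
  have h5 : (e * C : ℕ) ≤ (Fintype.card S * Fintype.card S * C : ℕ) := by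
    have : e ≤ Fintype.card S * Fintype.card S :=
      le_trans heS (Nat.mul_le_mul_left _ hlS)
    exact Nat.mul_le_mul_right _ this
  calc en (A ^ n) g v ≤ en (A ^ (n - e)) g g + en (A ^ e) g v := h3
    _ ≤ 0 + (((e * C : ℕ) : ℤ) : ZInf) := add_le_add h2 h4
    _ = (((e * C : ℕ) : ℤ) : ZInf) := by rw [zero_add]
    _ ≤ _ := WithTop.coe_le_coe.mpr (by exact_mod_cast h5)

end

theorem aux_final {S : Type*} [Fintype S] [DecidableEq S]
    (A : Matrix S S (Tropical ZInf)) (s₀ : S)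
    (hA : ∀ n : ℕ, 1 ≤ n → en (A ^ n) s₀ s₀ = 0 ∧ ∀ r : S, 0 ≤ en (A ^ n) r r)
    (hdeg : ∀ s t : S, en (A ^ (2 * mfac S)) t t < ⊤ →
      (∃ k : ℕ, 1 ≤ k ∧ en (A ^ (2 * mfac S * k)) s t < ⊤) →
      ∃ g, en (A ^ mfac S) g g = 0 ∧
        en (A ^ mfac S) s g < ⊤ ∧ en (A ^ mfac S) g t < ⊤)
    (C : ℕ)
    (hC : ∀ (s r : S) (c : ℤ), en A s r = (c : ZInf) → c.natAbs ≤ C) :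
    ∀ k : ℕ, 1 ≤ k → ∀ s r : S,
      en (A ^ (2 * mfac S * Fintype.card S * k)) s r < ⊤ →
      ∀ c : ℤ, en (A ^ (2 * mfac S * Fintype.card S * k)) s r = (c : ZInf) →
        c.natAbs ≤ 2 * mfac S * C := by
  intro k hk s r hfin c hc
  classical
  haveI : Nonempty S := ⟨s⟩
  have hS1 : 0 < Fintype.card S := Fintype.card_pos
  have hm1 : 0 < mfac S := Nat.mul_pos hS1 (Nat.factorial_pos _)
  have hdiag : ∀ (n : ℕ) (r' : S), 0 ≤ en (A ^ n) r' r' := by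
    intro n r'
    match n with
    | 0 => rw [pow_zero, en_one_diag]
    | Nat.succ n => exact (hA (n+1) (Nat.succ_le_succ (Nat.zero_le n))).2 r'
  obtain ⟨p, hp0, hpN, hpw⟩ := exists_walk A (2 * mfac S * Fintype.card S * k) s r hfin
  have hpwc : wt A p (2 * mfac S * Fintype.card S * k) ≤ (c : ZInf) := hc ▸ hpw
  -- lower bound
  obtain ⟨e0, q0, hq00, hq0e, _, he0S, _, _, hq0w⟩ :=
    reduce A hdiag 1 le_rfl (2 * mfac S * Fintype.card S * k) p
  have hq0c : wt A q0 e0 ≤ (c : ZInf) := le_trans hq0w hpwc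
  have hq0fin : wt A q0 e0 ≠ ⊤ := (lt_of_le_of_lt hq0c (WithTop.coe_lt_top c)).ne
  have hlow := (wt_bounds A C hC q0 e0 hq0fin).1
  have hlowc : (-((e0 * C : ℕ) : ℤ)) ≤ c := WithTop.coe_le_coe.mp (le_trans hlow hq0c)
  -- pigeonhole at multiples of 2*mfac S
  obtain ⟨a, b, hab, hbS, hpab, -⟩ := pigeon (S := S) (fun i => p (2 * mfac S * i)) 1 le_rfl
  rw [Nat.mul_one] at hbS
  obtain ⟨b', rfl⟩ : ∃ b', b = b' + 1 := ⟨b - 1, by omega⟩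

  -- decompose N = X + D + T
  have hXD : 2 * mfac S * (b' + 1) = 2 * mfac S * a + 2 * mfac S * (b' + 1 - a) := by
    have h' : a + (b' + 1 - a) = b' + 1 := by omega
    calc 2 * mfac S * (b' + 1) = 2 * mfac S * (a + (b' + 1 - a)) := by rw [h']
      _ = _ := by ring
  have hDpos : 0 < 2 * mfac S * (b' + 1 - a) := by
    have : 0 < b' + 1 - a := by omega
    positivity
  have hYN : 2 * mfac S * (b' + 1) ≤ 2 * mfac S * Fintype.card S * k :=
    le_trans (Nat.mul_le_mul_left _ hbS) (Nat.le_mul_of_pos_right _ hk)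
  have hXDN : 2 * mfac S * a + 2 * mfac S * (b' + 1 - a) ≤ 2 * mfac S * Fintype.card S * k := by
    rw [← hXD]; exact hYN
  obtain ⟨T, hT⟩ := Nat.exists_eq_add_of_le hXDN
  have hsplit : wt A p (2 * mfac S * Fintype.card S * k)
      = wt A p (2 * mfac S * a)
        + wt A (fun j => p (2 * mfac S * a + j)) (2 * mfac S * (b' + 1 - a))
        + wt A (fun j => p (2 * mfac S * a + 2 * mfac S * (b' + 1 - a) + j)) T := by
    rw [hT]; exact wt_split3 A p _ _ T
  have hwlt : wt A p (2 * mfac S * a)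
        + wt A (fun j => p (2 * mfac S * a + j)) (2 * mfac S * (b' + 1 - a))
        + wt A (fun j => p (2 * mfac S * a + 2 * mfac S * (b' + 1 - a) + j)) T < ⊤ := by
    rw [← hsplit]; exact lt_of_le_of_lt hpwc (WithTop.coe_lt_top c)
  obtain ⟨h12, h3⟩ := WithTop.add_lt_top.mp hwlt
  obtain ⟨h1, h2⟩ := WithTop.add_lt_top.mp h12
  -- u := p (2 * mfac S * a) has a small finite cycle
  obtain ⟨e1, q1, hq10, hq1e, _, he1S, _, he1pos, hq1w⟩ :=
    reduce A hdiag 1 le_rfl (2 * mfac S * (b' + 1 - a)) (fun j => p (2 * mfac S * a + j))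
  rw [Nat.mul_one] at he1S
  have he1posD : 0 < e1 := he1pos hDpos
  have hq1ww : wt A q1 e1 < ⊤ := lt_of_le_of_lt hq1w h2
  have hq10u : q1 0 = p (2 * mfac S * a) := by
    rw [hq10]; show p (2 * mfac S * a + 0) = _; rw [Nat.add_zero]
  have hq1eu : q1 e1 = p (2 * mfac S * a) := by
    rw [hq1e]; show p (2 * mfac S * a + 2 * mfac S * (b' + 1 - a)) = _
    rw [← hXD, hpab]
  have hucyc : en (A ^ e1) (p (2 * mfac S * a)) (p (2 * mfac S * a)) < ⊤ := by
    calc en (A ^ e1) (p (2 * mfac S * a)) (p (2 * mfac S * a))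
        = en (A ^ e1) (q1 0) (q1 e1) := by rw [hq10u, hq1eu]
      _ ≤ wt A q1 e1 := en_pow_le_wt A e1 q1
      _ < ⊤ := hq1ww
  have hd1 : e1 ∣ nfac S := Nat.dvd_factorial he1posD he1S
  have hd2 : e1 ∣ 2 * mfac S := by
    have : e1 ∣ mfac S := Dvd.dvd.mul_left hd1 (Fintype.card S)
    exact Dvd.dvd.mul_left this 2
  obtain ⟨m1, hm1e⟩ := hd2
  have hRef : en (A ^ (2 * mfac S)) (p (2 * mfac S * a)) (p (2 * mfac S * a)) < ⊤ := by
    have h' := diag_mult_lt_top A _ e1 hucyc m1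
    rw [mul_comm m1 e1, ← hm1e] at h'
    exact h'
  have hreach : en (A ^ (2 * mfac S * (b' + 1))) s (p (2 * mfac S * a)) < ⊤ := by
    have hfinpre : wt A p (2 * mfac S * a + 2 * mfac S * (b' + 1 - a)) < ⊤ := by
      rw [wt_add]; exact WithTop.add_lt_top.mpr ⟨h1, h2⟩
    calc en (A ^ (2 * mfac S * (b' + 1))) s (p (2 * mfac S * a))
        = en (A ^ (2 * mfac S * a + 2 * mfac S * (b' + 1 - a))) (p 0)
            (p (2 * mfac S * a + 2 * mfac S * (b' + 1 - a))) := by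
          rw [hp0, ← hXD, hpab]
      _ ≤ wt A p (2 * mfac S * a + 2 * mfac S * (b' + 1 - a)) := en_pow_le_wt A _ p
      _ < ⊤ := hfinpre
  obtain ⟨g, hg0, hsg, hgu⟩ := hdeg s (p (2 * mfac S * a)) hRef ⟨b' + 1, by omega, hreach⟩
  obtain ⟨lg, hlg1, hlgS, hlgz⟩ := small_zero_cycle A hdiag (mfac S) hm1 g hg0
  -- tail
  have hTfin : en (A ^ T) (p (2 * mfac S * a)) r < ⊤ := by
    calc en (A ^ T) (p (2 * mfac S * a)) r
        = en (A ^ T) (p (2 * mfac S * a + 2 * mfac S * (b' + 1 - a) + 0))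
            (p (2 * mfac S * a + 2 * mfac S * (b' + 1 - a) + T)) := by
          rw [Nat.add_zero, ← hT, hpN, ← hXD, hpab]
      _ ≤ wt A (fun j => p (2 * mfac S * a + 2 * mfac S * (b' + 1 - a) + j)) T :=
          en_pow_le_wt A T _
      _ < ⊤ := h3
  -- assemble g → r
  have hpad : en (A ^ (2 * mfac S * b')) g g ≤ 0 := by
    have : 2 * mfac S * b' = (2 * b') * mfac S := by ring
    rw [this]
    exact diag_mult_le A g (mfac S) (le_of_eq hg0) (2 * b')
  have hEgr_fin : en (A ^ (2 * mfac S * b' + (mfac S + T))) g r < ⊤ := by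
    calc en (A ^ (2 * mfac S * b' + (mfac S + T))) g r
        ≤ en (A ^ (2 * mfac S * b')) g g + en (A ^ (mfac S + T)) g r := en_tri A _ _ g g r
      _ ≤ en (A ^ (2 * mfac S * b')) g g
          + (en (A ^ (mfac S)) g (p (2 * mfac S * a)) + en (A ^ T) (p (2 * mfac S * a)) r) := by
          exact add_le_add_right (en_tri A _ _ g _ r) _
      _ < ⊤ := by
          refine WithTop.add_lt_top.mpr ⟨lt_of_le_of_lt hpad ?_, WithTop.add_lt_top.mpr ⟨hgu, hTfin⟩⟩
          exact lt_of_le_of_lt le_rfl (WithTop.coe_lt_top 0)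
  have hEgr : en (A ^ (2 * mfac S * b' + (mfac S + T))) g r
      ≤ (((Fintype.card S * Fintype.card S * C : ℕ) : ℤ) : ZInf) :=
    bounded_from_min A hdiag C hC g lg hlg1 hlgS hlgz _ r hEgr_fin
  have hsgb : en (A ^ mfac S) s g ≤ (((mfac S * C : ℕ) : ℤ) : ZInf) :=
    en_fin_le A C hC (mfac S) s g hsg
  have hEeq : mfac S + (2 * mfac S * b' + (mfac S + T)) = 2 * mfac S * Fintype.card S * k := by
    rw [hT]
    have hb'' : 2 * mfac S * b' + 2 * mfac S = 2 * mfac S * a + 2 * mfac S * (b' + 1 - a) := by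
      rw [← hXD]; ring
    omega
  have hupc : (c : ZInf) ≤ (((mfac S * C : ℕ) : ℤ) : ZInf)
      + (((Fintype.card S * Fintype.card S * C : ℕ) : ℤ) : ZInf) := by
    calc (c : ZInf) = en (A ^ (2 * mfac S * Fintype.card S * k)) s r := hc.symm
      _ = en (A ^ (mfac S + (2 * mfac S * b' + (mfac S + T)))) s r := by rw [hEeq]
      _ ≤ en (A ^ mfac S) s g + en (A ^ (2 * mfac S * b' + (mfac S + T))) g r :=
          en_tri A _ _ s g r
      _ ≤ _ := add_le_add hsgb hEgr
  have hupc' : c ≤ ((mfac S * C : ℕ) : ℤ) + ((Fintype.card S * Fintype.card S * C : ℕ) : ℤ) := by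
    have := hupc
    rw [← WithTop.coe_add] at this
    exact_mod_cast this
  -- numeric conclusion
  have hf1 : e0 * C ≤ 2 * mfac S * C := by
    have h1' : e0 ≤ Fintype.card S := by simpa using he0S
    have h2' : Fintype.card S ≤ mfac S := Nat.le_mul_of_pos_right _ (Nat.factorial_pos _)
    have h3' : e0 ≤ 2 * mfac S := by omega
    exact Nat.mul_le_mul_right _ h3'
  have hf2 : mfac S * C + Fintype.card S * Fintype.card S * C ≤ 2 * mfac S * C := by
    have h1' : Fintype.card S * Fintype.card S ≤ mfac S :=
      Nat.mul_le_mul_left _ (Nat.self_le_factorial _)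
    have h2' : Fintype.card S * Fintype.card S * C ≤ mfac S * C := Nat.mul_le_mul_right _ h1'
    calc mfac S * C + Fintype.card S * Fintype.card S * C ≤ mfac S * C + mfac S * C := by omega
      _ = 2 * mfac S * C := by ring
  have hsum : ((mfac S * C : ℕ) : ℤ) + ((Fintype.card S * Fintype.card S * C : ℕ) : ℤ)
      = ((mfac S * C + Fintype.card S * Fintype.card S * C : ℕ) : ℤ) := by push_cast; ring
  have hup2 : c ≤ ((2 * mfac S * C : ℕ) : ℤ) := by
    refine le_trans (le_trans hupc' (le_of_eq hsum)) ?_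
    exact_mod_cast hf2
  have hlow2 : -(((2 * mfac S * C : ℕ) : ℤ)) ≤ c := by
    have : ((e0 * C : ℕ) : ℤ) ≤ ((2 * mfac S * C : ℕ) : ℤ) := by exact_mod_cast hf1
    omega
  omega


/-- **Degenerate cycles have bounded weights**: if `A` is a degenerate stable-cycle matrix
whose finite entries are bounded by `C` in absolute value, then every finite entry of
`A^{2𝔪⬝|S|⬝k}` (for `k ≥ 1`) is bounded by `2𝔪⬝C` in absolute value. -/
theorem degenerate_cycle_bounded_weights {S : Type*} [Fintype S] [DecidableEq S]
    (A : Matrix S S (Tropical ZInf)) (s₀ : S) (hA : IsStableCycle A s₀)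
    (hdeg : Degenerate A) (C : ℕ)
    (hC : ∀ (s r : S) (c : ℤ), en A s r = (c : ZInf) → c.natAbs ≤ C) :
    ∀ k : ℕ, 1 ≤ k → ∀ s r : S,
      en (A ^ (2 * mfac S * Fintype.card S * k)) s r < ⊤ →
      ∀ c : ℤ, en (A ^ (2 * mfac S * Fintype.card S * k)) s r = (c : ZInf) →
        c.natAbs ≤ 2 * mfac S * C := by
  refine aux_final A s₀ hA ?_ C hC
  intro s t href hex
  obtain ⟨g, hgmin, h1, h2⟩ := hdeg s t href hex
  exact ⟨g, hgmin, h1, h2⟩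
end

section
/- (SCCs of nested MinGraphs) Let X, U, V ∈ ℤ∞^{S×S}, where X is a stable-cycle matrix, and suppose that P := U·stab(X)·V (min-plus products) is also a stable-cycle matrix. Then the number of strongly connected components of MinGraph(X) is at least the number of strongly connected components of MinGraph(P); moreover, if P is non-degenerate, then the number of strongly connected components of MinGraph(X) is strictly greater than that of MinGraph(P). -/
/-- The edge relation of `MinGraph A`: the vertices are the states of
`MinStates (A^𝔪)` and there is an edge from `s` to `r` whenever both are such vertices and
`(s, r)` is a grounded pair of `A`. -/
def MinGraphEdge {S : Type*} [Fintype S] [DecidableEq S]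
    (A : Matrix S S (Tropical ZInf)) (s r : S) : Prop :=
  s ∈ MinStates (A ^ mfac S) ∧ r ∈ MinStates (A ^ mfac S) ∧ (s, r) ∈ GrnPairs A

/-- Mutual reachability on the vertices of `MinGraph A`. -/
def sccSetoid {S : Type*} [Fintype S] [DecidableEq S] (A : Matrix S S (Tropical ZInf)) :
    Setoid {v : S // v ∈ MinStates (A ^ mfac S)} where
  r a b := Relation.ReflTransGen (MinGraphEdge A) a.1 b.1 ∧
    Relation.ReflTransGen (MinGraphEdge A) b.1 a.1
  iseqv := by
    refine ⟨fun a => ⟨.refl, .refl⟩, fun h => ⟨h.2, h.1⟩, fun h₁ h₂ => ⟨h₁.1.trans h₂.1, h₂.2.trans h₁.2⟩⟩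

/-- The number of strongly connected components of `MinGraph A`. -/
noncomputable def sccCount {S : Type*} [Fintype S] [DecidableEq S]
    (A : Matrix S S (Tropical ZInf)) : ℕ :=
  Nat.card (Quotient (sccSetoid A))

set_option linter.unusedSectionVars false
section Aux
variable {S : Type*} [Fintype S] [DecidableEq S]

lemma en_mul_lt_top_iff (A B : Matrix S S (Tropical ZInf)) (s t : S) :
    en (A * B) s t < ⊤ ↔ ∃ u, en A s u < ⊤ ∧ en B u t < ⊤ := by
  rw [en, Matrix.mul_apply, Finset.untrop_sum']
  rw [Finset.inf_lt_iff]
  constructor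
  · rintro ⟨u, -, hu⟩
    refine ⟨u, ?_⟩
    simpa [Function.comp, Tropical.untrop_mul, WithTop.add_lt_top, en] using hu
  · rintro ⟨u, h1, h2⟩
    refine ⟨u, Finset.mem_univ u, ?_⟩
    simpa [Function.comp, Tropical.untrop_mul, WithTop.add_lt_top, en] using ⟨h1, h2⟩

/-- finite walks in the support graph of `A` -/
def FWalk (A : Matrix S S (Tropical ZInf)) (N : ℕ) (s t : S) : Prop :=
  ∃ w : ℕ → S, w 0 = s ∧ w N = t ∧ ∀ i < N, en A (w i) (w (i + 1)) < ⊤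

lemma en_pow_lt_top_iff_fwalk (A : Matrix S S (Tropical ZInf)) (N : ℕ) (s t : S) :
    en (A ^ N) s t < ⊤ ↔ FWalk A N s t := by
  induction N generalizing t with
  | zero =>
    rw [pow_zero]
    constructor
    · intro h
      have hst : s = t := by
        by_contra hne
        rw [en, Matrix.one_apply_ne hne] at h
        simp [Tropical.untrop_zero] at h
      exact ⟨fun _ => s, rfl, by simp [hst], by simp⟩
    · rintro ⟨w, h0, hN, -⟩
      have : s = t := by rw [← h0, ← hN]
      subst this
      rw [en, Matrix.one_apply_eq]
      simp [Tropical.untrop_one]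
  | succ n ih =>
    rw [pow_succ, en_mul_lt_top_iff]
    constructor
    · rintro ⟨u, hu, hedge⟩
      obtain ⟨w, h0, hN, hstep⟩ := (ih u).mp hu
      refine ⟨fun i => if i ≤ n then w i else t, by simp [h0], by simp, ?_⟩
      intro i hi
      rcases Nat.lt_or_ge i n with h | h
      · simpa [Nat.le_of_lt h, Nat.succ_le_of_lt h] using hstep i h
      · have hin : i = n := by omega
        subst hin
        simpa [hN] using hedge
    · rintro ⟨w, h0, hN, hstep⟩
      refine ⟨w n, (ih (w n)).mpr ⟨w, h0, rfl, fun i hi => hstep i (by omega)⟩, ?_⟩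
      have := hstep n (by omega)
      rwa [hN] at this

end Aux
section Aux2
variable {S : Type*} [Fintype S] [DecidableEq S]

lemma fwalk_cut {A : Matrix S S (Tropical ZInf)} {N p q : ℕ} {s t : S}
    (w : ℕ → S) (h0 : w 0 = s) (hN : w N = t)
    (hstep : ∀ i < N, en A (w i) (w (i + 1)) < ⊤)
    (hpq : p < q) (hqN : q ≤ N) (heq : w p = w q) :
    FWalk A (N - (q - p)) s t := by
  refine ⟨fun i => if i ≤ p then w i else w (i + (q - p)), by simp [h0], ?_, ?_⟩
  · by_cases hc : N - (q - p) ≤ p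
    · have h1 : N - (q - p) = p := by omega
      have h2 : q = N := by omega
      simp only [h1, if_pos (le_refl p)]
      rw [heq, h2, hN]
    · simp only [if_neg hc]
      have : N - (q - p) + (q - p) = N := by omega
      rw [this, hN]
  · intro i hi
    by_cases h1 : i + 1 ≤ p
    · simp only [if_pos (by omega : i ≤ p), if_pos h1]
      exact hstep i (by omega)
    · by_cases h2 : i ≤ p
      · have hip : i = p := by omega
        subst hip
        simp only [if_pos (le_refl i), if_neg h1]
        have : i + 1 + (q - i) = q + 1 := by omega
        rw [this, heq]
        exact hstep q (by omega)
      · simp only [if_neg h2, if_neg (by omega : ¬ i + 1 ≤ p)]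
        have : i + 1 + (q - p) = (i + (q - p)) + 1 := by omega
        rw [this]
        exact hstep (i + (q - p)) (by omega)

lemma fwalk_pump {A : Matrix S S (Tropical ZInf)} {N p q : ℕ} {s t : S}
    (w : ℕ → S) (h0 : w 0 = s) (hN : w N = t)
    (hstep : ∀ i < N, en A (w i) (w (i + 1)) < ⊤)
    (hpq : p < q) (hqN : q ≤ N) (heq : w p = w q) (z : ℕ) :
    FWalk A (N + z * (q - p)) s t := by
  set d := q - p with hd
  have hdpos : 0 < d := by omega
  refine ⟨fun i => if i < q then w i
    else if i < q + z * d then w (p + (i - p) % d) else w (i - z * d), ?_, ?_, ?_⟩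
  · simp only [if_pos (by omega : 0 < q)]; exact h0
  · have h1 : ¬ N + z * d < q := by omega
    have h2 : ¬ N + z * d < q + z * d := by omega
    simp only [if_neg h1, if_neg h2]
    have : N + z * d - z * d = N := by omega
    rw [this, hN]
  · intro i hi
    by_cases hA : i + 1 < q
    · simp only [if_pos (by omega : i < q), if_pos hA]
      exact hstep i (by omega)
    · by_cases hB : i < q
      · -- i = q - 1
        have hiq' : i + 1 = q := by omega
        have hval : (if i + 1 < q then w (i + 1)
            else if i + 1 < q + z * d then w (p + (i + 1 - p) % d) else w (i + 1 - z * d)) = w q := by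
          rw [if_neg (by omega)]
          by_cases hz : i + 1 < q + z * d
          · rw [if_pos hz]
            have : i + 1 - p = d := by omega
            rw [this, Nat.mod_self, Nat.add_zero, heq]
          · rw [if_neg hz]
            have : i + 1 - z * d = q := by omega
            rw [this]
        simp only [if_pos hB]
        rw [hval, ← hiq']
        exact hstep i (by omega)
      · by_cases hC : i < q + z * d
        · -- inside pumped cycles
          have hpi : p ≤ i := by omega
          set c := (i - p) % d with hc
          have hcd : c < d := Nat.mod_lt _ hdpos
          have hsucc : (i + 1 - p) % d = (c + 1) % d := by
            have h' : i + 1 - p = (i - p) + 1 := by omega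
            conv_rhs => rw [Nat.add_mod]
            rw [h', Nat.add_mod, ← hc, Nat.mod_eq_of_lt hcd]
          by_cases hlast : c + 1 = d
          · have hpc : p + c = q - 1 := by omega
            have hnext : (if i + 1 < q then w (i + 1)
                else if i + 1 < q + z * d then w (p + (i + 1 - p) % d) else w (i + 1 - z * d)) = w q := by
              rw [if_neg (by omega)]
              by_cases hz : i + 1 < q + z * d
              · rw [if_pos hz, hsucc, hlast, Nat.mod_self, Nat.add_zero, heq]
              · rw [if_neg hz]
                have : i + 1 - z * d = q := by omega
                rw [this]
            simp only [if_neg hB, if_pos hC]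
            rw [hnext, hpc]
            have hq1 : q - 1 + 1 = q := by omega
            have := hstep (q - 1) (by omega)
            rwa [hq1] at this
          · have hlt : i + 1 < q + z * d := by
              rcases Nat.lt_or_ge (i + 1) (q + z * d) with h | h
              · exact h
              · exfalso
                have he : i + 1 = q + z * d := by omega
                have h2 : (i + 1 - p) % d = 0 := by
                  have : i + 1 - p = d * (1 + z) := by
                    rw [he]; ring_nf; omega
                  rw [this, Nat.mul_mod_right]
                rw [hsucc, Nat.mod_eq_of_lt (by omega : c + 1 < d)] at h2
                omega
            have hnext : (if i + 1 < q then w (i + 1)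
                else if i + 1 < q + z * d then w (p + (i + 1 - p) % d) else w (i + 1 - z * d))
                = w (p + (c + 1)) := by
              rw [if_neg (by omega), if_pos hlt, hsucc, Nat.mod_eq_of_lt (by omega : c + 1 < d)]
            simp only [if_neg hB, if_pos hC]
            rw [hnext, show p + (c + 1) = (p + c) + 1 by omega]
            exact hstep (p + c) (by omega)
        · -- tail
          simp only [if_neg (by omega : ¬ i < q), if_neg hC,
            if_neg (by omega : ¬ i + 1 < q), if_neg (by omega : ¬ i + 1 < q + z * d)]
          have : i + 1 - z * d = (i - z * d) + 1 := by omega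
          rw [this]
          exact hstep (i - z * d) (by omega)

end Aux2
section Aux3
variable {S : Type*} [Fintype S] [DecidableEq S]

lemma exists_checkpoint_repeat (w : ℕ → S) (σ : ℕ) :
    ∃ i j : ℕ, i < j ∧ j ≤ Fintype.card S ∧ w (i * σ) = w (j * σ) := by
  obtain ⟨a, b, hab, heq⟩ := Fintype.exists_ne_map_eq_of_card_lt
    (fun i : Fin (Fintype.card S + 1) => w (i.1 * σ)) (by simp)
  rcases Nat.lt_or_ge a.1 b.1 with h | h
  · exact ⟨a.1, b.1, h, by omega, heq⟩
  · have h' : b.1 < a.1 := by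
      rcases Nat.lt_or_ge b.1 a.1 with h' | h'
      · exact h'
      · exact absurd (Fin.ext (by omega)) hab
    exact ⟨b.1, a.1, h', by omega, heq.symm⟩

lemma fwalk_compress (A : Matrix S S (Tropical ZInf)) (s t : S) :
    ∀ j : ℕ, 1 ≤ j → FWalk A (j * nfac S) s t → FWalk A (mfac S) s t := by
  intro j
  induction j using Nat.strong_induction_on with
  | _ j ih =>
    intro hj hw
    set n := Fintype.card S with hn
    have hnfac : nfac S = n.factorial := rfl
    have hnfac1 : 1 ≤ nfac S := Nat.factorial_pos n
    rcases Nat.lt_or_ge n j with hbig | hsmall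
    · -- cut phase: j > n
      obtain ⟨w, h0, hN, hstep⟩ := hw
      obtain ⟨i1, i2, hi12, hi2n, heq⟩ := exists_checkpoint_repeat w (nfac S)
      have hqN : i2 * nfac S ≤ j * nfac S := Nat.mul_le_mul_right _ (by omega)
      have hlt : i1 * nfac S < i2 * nfac S :=
        Nat.mul_lt_mul_of_lt_of_le hi12 (le_refl _) (by omega)
      have hcut := fwalk_cut w h0 hN hstep hlt hqN heq
      have harith : j * nfac S - (i2 * nfac S - i1 * nfac S) = (j - (i2 - i1)) * nfac S := by
        rw [← Nat.sub_mul, ← Nat.sub_mul]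
      rw [harith] at hcut
      exact ih (j - (i2 - i1)) (by omega) (by omega) hcut
    · -- pump phase: j ≤ n
      obtain ⟨w, h0, hN, hstep⟩ := hw
      obtain ⟨p, q, hpq, hqn, heq⟩ := exists_checkpoint_repeat w 1
      simp only [Nat.mul_one] at heq
      have hnle : n ≤ j * nfac S := by
        calc n ≤ n.factorial := Nat.self_le_factorial n
        _ = 1 * nfac S := by rw [one_mul, hnfac]
        _ ≤ j * nfac S := Nat.mul_le_mul_right _ hj
      have hqN : q ≤ j * nfac S := by omega
      have hd : q - p ∣ nfac S := by
        rw [hnfac]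
        exact Nat.dvd_factorial (by omega) (by omega)
      have hpump := fwalk_pump w h0 hN hstep hpq hqN heq ((n - j) * (nfac S / (q - p)))
      have harith : j * nfac S + (n - j) * (nfac S / (q - p)) * (q - p) = mfac S := by
        rw [Nat.mul_assoc, Nat.div_mul_cancel hd, mfac, ← hn, ← Nat.add_mul]
        congr 1
        omega
      rwa [harith] at hpump

/-- key idempotency: finiteness at any positive multiple of `n!` gives finiteness at `mfac`. -/
lemma en_pow_idem (A : Matrix S S (Tropical ZInf)) {N : ℕ} {s t : S}
    (hdvd : nfac S ∣ N) (hN : 1 ≤ N) (h : en (A ^ N) s t < ⊤) :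
    en (A ^ mfac S) s t < ⊤ := by
  obtain ⟨j, hj⟩ := hdvd
  have hnfac1 : 1 ≤ nfac S := Nat.factorial_pos _
  have hj1 : 1 ≤ j := by
    rcases Nat.eq_zero_or_pos j with h0 | h1
    · subst h0; omega
    · exact h1
  rw [en_pow_lt_top_iff_fwalk] at h ⊢
  exact fwalk_compress A s t j hj1 (by rwa [hj, Nat.mul_comm] at h)

end Aux3
section Aux4
variable {S : Type*} [Fintype S] [DecidableEq S]

lemma zinf_zero_lt_top {x : ZInf} (h : x = 0) : x < ⊤ := by
  rw [h]; exact lt_top_iff_ne_top.mpr (by simp)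

lemma nfac_dvd_mfac : nfac S ∣ mfac S := dvd_mul_left (nfac S) (Fintype.card S)

lemma mfac_pos (s : S) : 1 ≤ mfac S := by
  have h1 : 0 < Fintype.card S := Fintype.card_pos_iff.mpr ⟨s⟩
  have h2 : 0 < nfac S := Nat.factorial_pos _
  exact Nat.mul_pos h1 h2

lemma en_pow_compose {A : Matrix S S (Tropical ZInf)} {m k : ℕ} {s u t : S}
    (h1 : en (A ^ m) s u < ⊤) (h2 : en (A ^ k) u t < ⊤) :
    en (A ^ (m + k)) s t < ⊤ := by
  rw [pow_add, en_mul_lt_top_iff]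
  exact ⟨u, h1, h2⟩

/-- compression between min-states: two `mfac`-hops with min-state midpoints collapse. -/
lemma en_compress {A : Matrix S S (Tropical ZInf)} {c g g' : S}
    (h1 : en (A ^ mfac S) c g < ⊤) (h2 : en (A ^ mfac S) g g' < ⊤) :
    en (A ^ mfac S) c g' < ⊤ := by
  have h := en_pow_compose h1 h2
  exact en_pow_idem A (Dvd.dvd.add nfac_dvd_mfac nfac_dvd_mfac)
    (by have := mfac_pos (S := S) c; omega) h

lemma en_stab_lt_top_iff (X : Matrix S S (Tropical ZInf)) (c d : S) :
    en (stab X) c d < ⊤ ↔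
      ∃ g, en (X ^ mfac S) g g = 0 ∧ en (X ^ mfac S) c g < ⊤ ∧ en (X ^ mfac S) g d < ⊤ := by
  rw [en, stab, Matrix.of_apply, Tropical.untrop_trop, Finset.inf_lt_iff]
  constructor
  · rintro ⟨g, -, hg⟩
    by_cases hmem : en (X ^ mfac S) g g = 0
    · rw [if_pos hmem] at hg
      rw [WithTop.add_lt_top] at hg
      exact ⟨g, hmem, hg.1, hg.2⟩
    · rw [if_neg hmem] at hg
      exact absurd hg (lt_irrefl _)
  · rintro ⟨g, hmem, h1, h2⟩
    refine ⟨g, Finset.mem_univ g, ?_⟩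
    rw [if_pos hmem, WithTop.add_lt_top]
    exact ⟨h1, h2⟩

variable (X U V : Matrix S S (Tropical ZInf))

/-- phase-0 anchors -/
def Anc0 (p g : S) : Prop :=
  en (X ^ mfac S) g g = 0 ∧
  (∃ a, nfac S ∣ a ∧ en ((U * stab X * V) ^ a * (U * X ^ mfac S)) p g < ⊤) ∧
  (∃ b, nfac S ∣ (b + 1) ∧ en ((X ^ mfac S * V) * (U * stab X * V) ^ b) g p < ⊤)

lemma transfer {p q g g' : S} {a b : ℕ}
    (hg' : en (X ^ mfac S) g' g' = 0)
    (hpre : en ((U * stab X * V) ^ a * (U * X ^ mfac S)) p g < ⊤)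
    (hlink : en (X ^ mfac S) g g' < ⊤)
    (hsuf : en ((X ^ mfac S * V) * (U * stab X * V) ^ b) g' q < ⊤) :
    en ((U * stab X * V) ^ (a + 1 + b)) p q < ⊤ := by
  set P := U * stab X * V with hP
  have hpre' : en ((P ^ a * U) * X ^ mfac S) p g < ⊤ := by
    rwa [mul_assoc]
  rw [en_mul_lt_top_iff] at hpre'
  obtain ⟨c, hc1, hc2⟩ := hpre'
  have hcg' : en (X ^ mfac S) c g' < ⊤ := en_compress hc2 hlink
  have hsuf' : en ((X ^ mfac S) * (V * P ^ b)) g' q < ⊤ := by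
    rwa [← mul_assoc]
  rw [en_mul_lt_top_iff] at hsuf'
  obtain ⟨d, hd1, hd2⟩ := hsuf'
  have hstab : en (stab X) c d < ⊤ := (en_stab_lt_top_iff X c d).mpr ⟨g', hg', hcg', hd1⟩
  have hfin : en ((P ^ a * U) * (stab X * (V * P ^ b))) p q < ⊤ := by
    rw [en_mul_lt_top_iff]
    refine ⟨c, hc1, ?_⟩
    rw [en_mul_lt_top_iff]
    exact ⟨d, hstab, hd2⟩
  have hEq : (P ^ a * U) * (stab X * (V * P ^ b)) = P ^ (a + 1 + b) := by
    rw [pow_add, pow_add, pow_one, hP]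
    simp only [mul_assoc]
  rwa [hEq] at hfin

lemma anc0_exists {p : S} {N : ℕ} (hdvd : nfac S ∣ N) (hN : 1 ≤ N)
    (h : en ((U * stab X * V) ^ N) p p < ⊤) : ∃ g, Anc0 X U V p g := by
  set P := U * stab X * V with hP
  have hEq : P ^ N = U * (stab X * (V * P ^ (N - 1))) := by
    conv_lhs => rw [show N = 1 + (N - 1) by omega]
    rw [pow_add, pow_one, hP]
    simp only [mul_assoc]
  rw [hEq, en_mul_lt_top_iff] at h
  obtain ⟨c, hc1, hc2⟩ := h
  rw [en_mul_lt_top_iff] at hc2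
  obtain ⟨d, hd1, hd2⟩ := hc2
  rw [en_stab_lt_top_iff] at hd1
  obtain ⟨g, hg, hcg, hgd⟩ := hd1
  refine ⟨g, hg, ⟨0, dvd_zero _, ?_⟩, ⟨N - 1, by
    have : N - 1 + 1 = N := by omega
    rw [this]; exact hdvd, ?_⟩⟩
  · rw [pow_zero, one_mul, en_mul_lt_top_iff]
    exact ⟨c, hc1, hcg⟩
  · rw [mul_assoc, en_mul_lt_top_iff]
    exact ⟨d, hgd, hd2⟩

lemma anc0_closure {p g g' : S} (hanc : Anc0 X U V p g)
    (hg' : en (X ^ mfac S) g' g' = 0)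
    (h1 : en (X ^ mfac S) g g' < ⊤) (h2 : en (X ^ mfac S) g' g < ⊤) :
    Anc0 X U V p g' := by
  obtain ⟨hg, ⟨a, ha, hpre⟩, ⟨b, hb, hsuf⟩⟩ := hanc
  refine ⟨hg', ⟨a, ha, ?_⟩, ⟨b, hb, ?_⟩⟩
  · rw [← mul_assoc, en_mul_lt_top_iff] at hpre ⊢
    obtain ⟨c, hc1, hc2⟩ := hpre
    exact ⟨c, hc1, en_compress hc2 h1⟩
  · rw [mul_assoc, en_mul_lt_top_iff] at hsuf ⊢
    obtain ⟨d, hd1, hd2⟩ := hsuf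
    exact ⟨d, en_compress h2 hd1, hd2⟩

end Aux4
section Aux5
variable {S : Type*} [Fintype S] [DecidableEq S]

lemma rtg_imp (A : Matrix S S (Tropical ZInf)) {p q : S}
    (hp : en (A ^ mfac S) p p = 0)
    (h : Relation.ReflTransGen (MinGraphEdge A) p q) : en (A ^ mfac S) p q < ⊤ := by
  induction h with
    | refl => exact zinf_zero_lt_top hp
    | tail hab hbc ih =>
      obtain ⟨hbmem, hcmem, g, hgmem, hbg, hgc⟩ := hbc
      have h3 := en_pow_compose ih (en_pow_compose hbg hgc)
      exact en_pow_idem A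
        (dvd_add nfac_dvd_mfac (dvd_add nfac_dvd_mfac nfac_dvd_mfac))
        (by have := mfac_pos (S := S) p; omega) h3

lemma rtg_iff (A : Matrix S S (Tropical ZInf)) {p q : S}
    (hp : en (A ^ mfac S) p p = 0) (hq : en (A ^ mfac S) q q = 0) :
    Relation.ReflTransGen (MinGraphEdge A) p q ↔ en (A ^ mfac S) p q < ⊤ := by
  constructor
  · exact rtg_imp A hp
  · intro h
    exact Relation.ReflTransGen.single ⟨hp, hq, ⟨p, hp, zinf_zero_lt_top hp, h⟩⟩

variable (X U V : Matrix S S (Tropical ZInf))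

noncomputable def anchOf (p : S) (hp : en ((U * stab X * V) ^ mfac S) p p = 0) : S :=
  (anc0_exists X U V nfac_dvd_mfac (mfac_pos p) (zinf_zero_lt_top hp)).choose

lemma anchOf_spec (p : S) (hp : en ((U * stab X * V) ^ mfac S) p p = 0) :
    Anc0 X U V p (anchOf X U V p hp) :=
  (anc0_exists X U V nfac_dvd_mfac (mfac_pos p) (zinf_zero_lt_top hp)).choose_spec

noncomputable def anchQ :
    Quotient (sccSetoid (U * stab X * V)) → Quotient (sccSetoid X) := fun C =>
  Quotient.mk (sccSetoid X)
    ⟨anchOf X U V C.out.1 C.out.2, (anchOf_spec X U V C.out.1 C.out.2).1⟩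

/-- from X-equivalence of anchors to P-equivalence of states -/
lemma key_transfer {p q g g' : S}
    (hap : Anc0 X U V p g) (haq : Anc0 X U V q g')
    (h1 : en (X ^ mfac S) g g' < ⊤) (h2 : en (X ^ mfac S) g' g < ⊤) :
    en ((U * stab X * V) ^ mfac S) p q < ⊤ ∧ en ((U * stab X * V) ^ mfac S) q p < ⊤ := by
  have hpg' : Anc0 X U V p g' := anc0_closure X U V hap haq.1 h1 h2
  obtain ⟨hg'd, ⟨a, ha, hpre⟩, ⟨b, hb, hsuf⟩⟩ := hpg'
  obtain ⟨-, ⟨a', ha', hpre'⟩, ⟨b', hb', hsuf'⟩⟩ := haq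
  constructor
  · have ht := transfer X U V hg'd hpre (zinf_zero_lt_top hg'd) hsuf'
    refine en_pow_idem _ ?_ (by omega) ht
    have e : a + 1 + b' = a + (b' + 1) := by omega
    rw [e]; exact dvd_add ha hb'
  · have ht := transfer X U V hg'd hpre' (zinf_zero_lt_top hg'd) hsuf
    refine en_pow_idem _ ?_ (by omega) ht
    have e : a' + 1 + b = a' + (b + 1) := by omega
    rw [e]; exact dvd_add ha' hb

lemma anchQ_injective : Function.Injective (anchQ X U V) := by
  intro C1 C2 h
  simp only [anchQ] at h
  obtain ⟨h12, h21⟩ := Quotient.exact h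
  have hg1 := anchOf_spec X U V C1.out.1 C1.out.2
  have hg2 := anchOf_spec X U V C2.out.1 C2.out.2
  have e12 := (rtg_iff X hg1.1 hg2.1).mp h12
  have e21 := (rtg_iff X hg2.1 hg1.1).mp h21
  obtain ⟨k1, k2⟩ := key_transfer X U V hg1 hg2 e12 e21
  have hrel : (sccSetoid (U * stab X * V)).r C1.out C2.out :=
    ⟨(rtg_iff _ C1.out.2 C2.out.2).mpr k1, (rtg_iff _ C2.out.2 C1.out.2).mpr k2⟩
  calc C1 = Quotient.mk _ C1.out := (Quotient.out_eq C1).symm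
  _ = Quotient.mk _ C2.out := Quotient.sound hrel
  _ = C2 := Quotient.out_eq C2

end Aux5
/-- **SCCs of nested MinGraphs**: if `X` is a stable-cycle matrix and
`P = U ⬝ stab X ⬝ V` is also a stable-cycle matrix, then `MinGraph X` has at least as many
strongly connected components as `MinGraph P`; strictly more if `P` is non-degenerate. -/
theorem sccCount_nested_minGraph {S : Type*} [Fintype S] [DecidableEq S]
    (X U V : Matrix S S (Tropical ZInf)) (x₀ : S) (hX : IsStableCycle X x₀)
    (p₀ : S) (hP : IsStableCycle (U * stab X * V) p₀) :
    sccCount (U * stab X * V) ≤ sccCount X ∧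
      (¬ Degenerate (U * stab X * V) → sccCount (U * stab X * V) < sccCount X) := by
  classical
  letI : Fintype (Quotient (sccSetoid (U * stab X * V))) := Fintype.ofFinite _
  letI : Fintype (Quotient (sccSetoid X)) := Fintype.ofFinite _
  have hMpos : 1 ≤ mfac S := mfac_pos x₀
  have hinj := anchQ_injective X U V
  constructor
  · rw [sccCount, sccCount, Nat.card_eq_fintype_card, Nat.card_eq_fintype_card]
    exact Fintype.card_le_of_injective _ hinj
  · intro hdeg
    rw [Degenerate] at hdeg
    push_neg at hdeg
    obtain ⟨s, t, hts, ⟨k, hk, hst⟩, hngr⟩ := hdeg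
    have htt : en ((U * stab X * V) ^ (2 * mfac S)) t t < ⊤ := hts
    obtain ⟨gs, hanc_t⟩ := anc0_exists X U V
      (Dvd.dvd.mul_left nfac_dvd_mfac 2) (by omega) htt
    have hnot : (Quotient.mk (sccSetoid X) ⟨gs, hanc_t.1⟩) ∉ Set.range (anchQ X U V) := by
      rintro ⟨C, hC⟩
      simp only [anchQ] at hC
      obtain ⟨h12, h21⟩ := Quotient.exact hC
      have hgC := anchOf_spec X U V C.out.1 C.out.2
      have e12 : en (X ^ mfac S) (anchOf X U V C.out.1 C.out.2) gs < ⊤ :=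
        (rtg_iff X hgC.1 hanc_t.1).mp h12
      have e21 : en (X ^ mfac S) gs (anchOf X U V C.out.1 C.out.2) < ⊤ :=
        (rtg_iff X hanc_t.1 hgC.1).mp h21
      have hpgs : Anc0 X U V C.out.1 gs := anc0_closure X U V hgC hanc_t.1 e12 e21
      obtain ⟨hgsd, ⟨ap, hap, hprep⟩, ⟨bp, hbp, hsufp⟩⟩ := hpgs
      obtain ⟨-, ⟨at', hat, hpret⟩, ⟨bt, hbt, hsuft⟩⟩ := hanc_t
      have hA : en ((U * stab X * V) ^ mfac S) C.out.1 t < ⊤ := by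
        have ht := transfer X U V hgsd hprep (zinf_zero_lt_top hgsd) hsuft
        refine en_pow_idem _ ?_ (by omega) ht
        have e : ap + 1 + bt = ap + (bt + 1) := by omega
        rw [e]; exact dvd_add hap hbt
      have hpre_s : en ((U * stab X * V) ^ (2 * mfac S * k + at') * (U * X ^ mfac S)) s gs < ⊤ := by
        rw [pow_add, mul_assoc, en_mul_lt_top_iff]
        exact ⟨t, hst, hpret⟩
      have hB : en ((U * stab X * V) ^ mfac S) s C.out.1 < ⊤ := by
        have ht := transfer X U V hgsd hpre_s (zinf_zero_lt_top hgsd) hsufp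
        refine en_pow_idem _ ?_ (by omega) ht
        have e : 2 * mfac S * k + at' + 1 + bp = 2 * mfac S * k + at' + (bp + 1) := by omega
        rw [e]
        exact dvd_add (dvd_add (Dvd.dvd.mul_right (Dvd.dvd.mul_left nfac_dvd_mfac 2) k) hat) hbp
      exact hngr ⟨C.out.1, C.out.2, hB, hA⟩
    rw [sccCount, sccCount, Nat.card_eq_fintype_card, Nat.card_eq_fintype_card]
    exact Fintype.card_lt_of_injective_of_notMem _ hinj hnot
end
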